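/- arXiv:1602.04321 — 8 statements merged into one kernel-verified Lean document; each statement's English description precedes it below -/
import Mathlib

section
/- Let R be a ring and σ : P₋₁ → P₀ an R-linear map between projective R-modules. Let C = P₀/range(σ) be the cokernel of σ and let σ' : P₋₁ → range(σ) be the map σ with codomain restricted to its image. Then for every R-module M the following are equivalent: (1) every R-linear map P₋₁ → M factors through σ (i.e. M ∈ D_σ); (2) every R-linear map P₋₁ → M factors through σ' (i.e. M ∈ D_{σ'}) and every short exact sequence 0 → M → X → C → 0 of R-modules splits (i.e. Ext¹_R(C, M) = 0). -/
universe u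

/-- `M ∈ D_σ`: every `R`-linear map `A → M` factors through `σ : A → B`. -/
def MemD {R : Type u} [Ring R] {A B : Type u} [AddCommGroup A] [Module R A]
    [AddCommGroup B] [Module R B] (σ : A →ₗ[R] B)
    (M : Type u) [AddCommGroup M] [Module R M] : Prop :=
  ∀ f : A →ₗ[R] M, ∃ g : B →ₗ[R] M, g.comp σ = f

/-!
`M ∈ D_σ` splits as `M ∈ D_{σ'}` together with `M ∈ D_ι` for the inclusion `ι : range σ → P₀`,
since `σ = ι ∘ σ'` with `σ'` surjective. For a submodule `N` of a projective module `P`,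
`M ∈ D_ι` says exactly that every extension of `P ⧸ N` by `M` splits: given such an extension,
lift `P → P ⧸ N` to the middle term, correct the lift on `N` using `M ∈ D_ι`, and descend to a
section; conversely, a map `g : N → M` extends to `P` through a retraction of the pushout extension
`0 → M → (M × P) ⧸ {(g y, -y)} → P ⧸ N → 0`.
-/

namespace MemD

variable {R : Type u} [Ring R] {A B C M : Type u} [AddCommGroup A] [Module R A]
  [AddCommGroup B] [Module R B] [AddCommGroup C] [Module R C] [AddCommGroup M] [Module R M]
  {τ : A →ₗ[R] B} {j : B →ₗ[R] C}

theorem comp (hτ : MemD τ M) (hj : MemD j M) : MemD (j ∘ₗ τ) M := by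
  intro f
  obtain ⟨g, rfl⟩ := hτ f
  obtain ⟨h, rfl⟩ := hj g
  exact ⟨h, rfl⟩

theorem of_comp (h : MemD (j ∘ₗ τ) M) : MemD τ M := by
  intro f
  obtain ⟨g, rfl⟩ := h f
  exact ⟨g ∘ₗ j, rfl⟩

theorem of_comp_of_surjective (hτ : Function.Surjective τ) (h : MemD (j ∘ₗ τ) M) :
    MemD j M := by
  intro f
  obtain ⟨g, hg⟩ := h (f ∘ₗ τ)
  exact ⟨g, (LinearMap.cancel_right hτ).1 hg⟩

end MemD

theorem memD_iff_memD_rangeRestrict_and_memD_subtype {R : Type u} [Ring R] {A B M : Type u}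
    [AddCommGroup A] [Module R A] [AddCommGroup B] [Module R B] [AddCommGroup M] [Module R M]
    (σ : A →ₗ[R] B) :
    MemD σ M ↔ MemD σ.rangeRestrict M ∧ MemD (LinearMap.range σ).subtype M :=
  ⟨fun h => ⟨MemD.of_comp (j := (LinearMap.range σ).subtype) h,
      MemD.of_comp_of_surjective σ.surjective_rangeRestrict h⟩,
    fun ⟨h₁, h₂⟩ => h₁.comp h₂⟩

section Pushout

variable {R : Type u} [Ring R] {M P : Type u} [AddCommGroup M] [Module R M]
  [AddCommGroup P] [Module R P] {N : Submodule R P} (g : N →ₗ[R] M)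

def pushoutRel : Submodule R (M × P) :=
  LinearMap.range (g.prod (-N.subtype))

abbrev Pushout : Type u := (M × P) ⧸ pushoutRel g

def pushoutInl : M →ₗ[R] Pushout g :=
  (pushoutRel g).mkQ ∘ₗ LinearMap.inl R M P

def pushoutInr : P →ₗ[R] Pushout g :=
  (pushoutRel g).mkQ ∘ₗ LinearMap.inr R M P

def pushoutToQuotient : Pushout g →ₗ[R] P ⧸ N :=
  (pushoutRel g).liftQ (N.mkQ ∘ₗ LinearMap.snd R M P) <| by
    rintro _ ⟨y, rfl⟩
    simp

theorem pushoutInr_apply_coe (y : N) : pushoutInr g y = pushoutInl g (g y) := by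
  refine (Submodule.Quotient.eq _).2 ⟨-y, ?_⟩
  simp

theorem pushoutInl_injective : Function.Injective (pushoutInl g) := by
  refine (injective_iff_map_eq_zero _).2 fun m hm => ?_
  obtain ⟨y, hy⟩ := (Submodule.Quotient.mk_eq_zero _).1 hm
  simp only [LinearMap.prod_apply, LinearMap.coe_neg, Submodule.coe_subtype, Function.prod_apply,
    Pi.neg_apply, LinearMap.coe_inl, Prod.ext_iff, neg_eq_zero, ZeroMemClass.coe_eq_zero] at hy
  rw [← hy.1, hy.2, map_zero]

theorem pushoutToQuotient_surjective : Function.Surjective (pushoutToQuotient g) := by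
  intro c
  obtain ⟨q, rfl⟩ := N.mkQ_surjective c
  exact ⟨pushoutInr g q, rfl⟩

theorem ker_pushoutToQuotient :
    LinearMap.ker (pushoutToQuotient g) = LinearMap.range (pushoutInl g) := by
  refine le_antisymm ?_ ?_
  · intro x hx
    obtain ⟨⟨m, q⟩, rfl⟩ := (pushoutRel g).mkQ_surjective x
    have hq : q ∈ N := (Submodule.Quotient.mk_eq_zero N).1 hx
    refine ⟨m + g ⟨q, hq⟩, ?_⟩
    rw [map_add, ← pushoutInr_apply_coe]
    simp [pushoutInl, pushoutInr, ← Submodule.Quotient.mk_add]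
  · rintro _ ⟨m, rfl⟩
    simp [pushoutToQuotient, pushoutInl]

end Pushout

section Splitting

variable {R : Type u} [Ring R] {M P : Type u} [AddCommGroup M] [Module R M]
  [AddCommGroup P] [Module R P] {N : Submodule R P}

theorem LinearMap.exists_comp_eq_of_range_le {A X : Type u} [AddCommGroup A] [Module R A]
    [AddCommGroup X] [Module R X] {i : M →ₗ[R] X} (hi : Function.Injective i) {f : A →ₗ[R] X}
    (hf : LinearMap.range f ≤ LinearMap.range i) : ∃ f' : A →ₗ[R] M, i ∘ₗ f' = f := by
  refine ⟨(LinearEquiv.ofInjective i hi).symm ∘ₗ f.codRestrict _ fun x => hf ⟨x, rfl⟩, ?_⟩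
  ext x
  simp

theorem exists_section_of_memD_subtype [Module.Projective R P] (hM : MemD N.subtype M)
    {X : Type u} [AddCommGroup X] [Module R X] {i : M →ₗ[R] X} {p : X →ₗ[R] P ⧸ N}
    (hi : Function.Injective i) (hp : Function.Surjective p) (hexact : Function.Exact i p) :
    ∃ s : P ⧸ N →ₗ[R] X, p ∘ₗ s = LinearMap.id := by
  obtain ⟨h, hh⟩ := Module.projective_lifting_property p N.mkQ hp
  obtain ⟨f, hf⟩ : ∃ f : N →ₗ[R] M, i ∘ₗ f = h ∘ₗ N.subtype := by
    refine LinearMap.exists_comp_eq_of_range_le hi ?_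
    rintro _ ⟨y, rfl⟩
    refine (hexact _).1 ?_
    rw [LinearMap.comp_apply, ← LinearMap.comp_apply p, hh]
    exact (Submodule.Quotient.mk_eq_zero N).2 y.2
  obtain ⟨g, hg⟩ := hM f
  -- `h - i ∘ g` still lifts `N.mkQ` and vanishes on `N`, so it descends to a section.
  have hvanish : N ≤ LinearMap.ker (h - i ∘ₗ g) := fun y hy => by
    have : h ∘ₗ N.subtype = (i ∘ₗ g) ∘ₗ N.subtype := by rw [← hf, ← hg]; rfl
    simpa [sub_eq_zero] using LinearMap.congr_fun this ⟨y, hy⟩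
  refine ⟨N.liftQ _ hvanish, Submodule.linearMap_qext _ ?_⟩
  rw [LinearMap.comp_assoc, Submodule.liftQ_mkQ, LinearMap.comp_sub, hh, ← LinearMap.comp_assoc,
    hexact.linearMap_comp_eq_zero, LinearMap.zero_comp, sub_zero]
  rfl

theorem memD_subtype_iff_forall_exists_retraction [Module.Projective R P] :
    MemD N.subtype M ↔
      ∀ (X : Type u) [AddCommGroup X] [Module R X]
        (i : M →ₗ[R] X) (p : X →ₗ[R] P ⧸ N),
        Function.Injective i → Function.Surjective p →
        LinearMap.ker p = LinearMap.range i →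
        ∃ r : X →ₗ[R] M, r.comp i = LinearMap.id := by
  constructor
  · intro hM X _ _ i p hi hp hexact
    rw [← LinearMap.exact_iff] at hexact
    exact ((hexact.split_tfae hi hp).out 0 1).1 (exists_section_of_memD_subtype hM hi hp hexact)
  · intro hsplit g
    obtain ⟨r, hr⟩ := hsplit _ (pushoutInl g) (pushoutToQuotient g) (pushoutInl_injective g)
      (pushoutToQuotient_surjective g) (ker_pushoutToQuotient g)
    refine ⟨r ∘ₗ pushoutInr g, LinearMap.ext fun y => ?_⟩
    simp only [LinearMap.comp_apply, Submodule.subtype_apply, pushoutInr_apply_coe]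
    exact LinearMap.congr_fun hr (g y)

end Splitting

theorem stmt_0_general {R : Type u} [Ring R]
    (P₁ P₀ : Type u) [AddCommGroup P₁] [Module R P₁] [AddCommGroup P₀] [Module R P₀]
    [Module.Projective R P₀] (σ : P₁ →ₗ[R] P₀)
    (M : Type u) [AddCommGroup M] [Module R M] :
    MemD σ M ↔
      (MemD σ.rangeRestrict M ∧
       ∀ (X : Type u) [AddCommGroup X] [Module R X]
         (i : M →ₗ[R] X) (p : X →ₗ[R] P₀ ⧸ LinearMap.range σ),
         Function.Injective i → Function.Surjective p →
         LinearMap.ker p = LinearMap.range i →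
         ∃ r : X →ₗ[R] M, r.comp i = LinearMap.id) := by
  rw [memD_iff_memD_rangeRestrict_and_memD_subtype, memD_subtype_iff_forall_exists_retraction]

/-- Lemma: `M ∈ D_σ` iff `M ∈ D_{σ'}` (with `σ' : P₋₁ → range σ` the corestriction of `σ`)
and every short exact sequence `0 → M → X → C → 0`, where `C = coker σ`, splits. -/
theorem stmt_0 {R : Type u} [Ring R]
    (P₁ P₀ : Type u) [AddCommGroup P₁] [Module R P₁] [AddCommGroup P₀] [Module R P₀]
    [Module.Projective R P₁] [Module.Projective R P₀] (σ : P₁ →ₗ[R] P₀)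
    (M : Type u) [AddCommGroup M] [Module R M] :
    MemD σ M ↔
      (MemD σ.rangeRestrict M ∧
       ∀ (X : Type u) [AddCommGroup X] [Module R X]
         (i : M →ₗ[R] X) (p : X →ₗ[R] P₀ ⧸ LinearMap.range σ),
         Function.Injective i → Function.Surjective p →
         LinearMap.ker p = LinearMap.range i →
         ∃ r : X →ₗ[R] M, r.comp i = LinearMap.id) :=
  stmt_0_general P₁ P₀ σ M
end

section
/- Let R be a ring and σ : P₋₁ → P₀ an R-linear map between projective R-modules. Then there exist free R-modules F₋₁, F₀ and an R-linear map φ : F₋₁ → F₀ such that D_σ = D_φ, i.e. for every R-module M, every R-linear map P₋₁ → M factors through σ if and only if every R-linear map F₋₁ → M factors through φ. -/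
universe u

/-!
Both projective modules are retracts of free modules, `i₁ ∘ s₁ = id` on `P₁` and
`i₀ ∘ s₀ = id` on `P₀`. Enlarging the codomain of a map along a split monomorphism does not
change its class `D`, which takes care of `P₀`. For the domain, a map `F₁ → M` comes from a map
`P₁ → M` exactly when it kills the image of the idempotent `1 - s₁ i₁`; adding that idempotent
as a second component forces this, so `D_σ = D_φ` for `φ = (s₀ σ i₁, 1 - s₁ i₁)`.
-/

section

variable {R : Type u} [Ring R] {A B C : Type u} [AddCommGroup A] [Module R A]
  [AddCommGroup B] [Module R B] [AddCommGroup C] [Module R C]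
  (M : Type u) [AddCommGroup M] [Module R M]

theorem memD_comp_iff_of_leftInverse (τ : A →ₗ[R] B) {s : B →ₗ[R] C} {r : C →ₗ[R] B}
    (hrs : r ∘ₗ s = .id) : MemD (s ∘ₗ τ) M ↔ MemD τ M := by
  refine ⟨fun h f ↦ ?_, fun h f ↦ ?_⟩
  · obtain ⟨g, hg⟩ := h f
    exact ⟨g ∘ₗ s, hg⟩
  · obtain ⟨g, hg⟩ := h f
    refine ⟨g ∘ₗ r, ?_⟩
    rw [LinearMap.comp_assoc, ← LinearMap.comp_assoc τ s r, hrs, LinearMap.id_comp, hg]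

theorem memD_iff_memD_prod_of_leftInverse (σ : A →ₗ[R] B) {i : C →ₗ[R] A} {s : A →ₗ[R] C}
    (his : i ∘ₗ s = .id) : MemD σ M ↔ MemD ((σ ∘ₗ i).prod (.id - s ∘ₗ i)) M := by
  have hi : ∀ a, i (s a) = a := LinearMap.congr_fun his
  refine ⟨fun h f ↦ ?_, fun h f ↦ ?_⟩
  · obtain ⟨g, hg⟩ := h (f ∘ₗ s)
    refine ⟨g ∘ₗ LinearMap.fst R B C + f ∘ₗ LinearMap.snd R B C, LinearMap.ext fun x ↦ ?_⟩
    have hgx : g (σ (i x)) = f (s (i x)) := LinearMap.congr_fun hg (i x)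
    simp [hgx]
  · obtain ⟨g, hg⟩ := h (f ∘ₗ i)
    refine ⟨g ∘ₗ LinearMap.inl R B C, LinearMap.ext fun a ↦ ?_⟩
    -- `s a` is sent by the second component `1 - s i` to `0`, so `φ (s a) = (σ a, 0)`.
    have hga : g (σ (i (s a)), s a - s (i (s a))) = f (i (s a)) := LinearMap.congr_fun hg (s a)
    simpa [hi] using hga

end

/-- Lemma: for any map `σ` between projective modules there is a map `φ` between free
modules with `D_σ = D_φ`. -/
theorem stmt_1 {R : Type u} [Ring R]
    (P₁ P₀ : Type u) [AddCommGroup P₁] [Module R P₁] [AddCommGroup P₀] [Module R P₀]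
    [Module.Projective R P₁] [Module.Projective R P₀] (σ : P₁ →ₗ[R] P₀) :
    ∃ (F₁ F₀ : Type u) (_ : AddCommGroup F₁) (_ : Module R F₁)
      (_ : AddCommGroup F₀) (_ : Module R F₀),
      Module.Free R F₁ ∧ Module.Free R F₀ ∧
      ∃ φ : F₁ →ₗ[R] F₀,
        ∀ (M : Type u) [AddCommGroup M] [Module R M], MemD σ M ↔ MemD φ M := by
  obtain ⟨s₁, hs₁⟩ := Module.projective_def'.mp ‹Module.Projective R P₁›
  obtain ⟨s₀, hs₀⟩ := Module.projective_def'.mp ‹Module.Projective R P₀›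
  set i₁ : (P₁ →₀ R) →ₗ[R] P₁ := Finsupp.linearCombination R id
  set i₀ : (P₀ →₀ R) →ₗ[R] P₀ := Finsupp.linearCombination R id
  have hsplit : (i₀.prodMap .id) ∘ₗ (s₀.prodMap .id) = (.id : P₀ × (P₁ →₀ R) →ₗ[R] _) := by
    rw [LinearMap.prodMap_comp, hs₀, LinearMap.id_comp, LinearMap.prodMap_id]
  refine ⟨P₁ →₀ R, (P₀ →₀ R) × (P₁ →₀ R), _, _, _, _, inferInstance, inferInstance,
    s₀.prodMap .id ∘ₗ (σ ∘ₗ i₁).prod (.id - s₁ ∘ₗ i₁), fun M _ _ ↦ ?_⟩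
  rw [memD_comp_iff_of_leftInverse M _ hsplit]
  exact memD_iff_memD_prod_of_leftInverse M σ hs₁
end

section
/- Let R be a ring, P a finitely generated projective R-module, G an R-module, and σ' : P → G a surjective R-linear map. Then the class D_{σ'} of all R-modules M such that every R-linear map P → M factors through σ' is closed under submodules (if M ∈ D_{σ'} and N is a submodule of M, then N ∈ D_{σ'}) and under arbitrary direct sums (if Mᵢ ∈ D_{σ'} for all i ∈ I, then ⊕_{i∈I} Mᵢ ∈ D_{σ'}). -/
/-!
A factorisation `g ∘ σ = f` through a surjective `σ` has the same range as `f`, so when `f` lands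
in a submodule `N` so does `g`. A map from a finitely generated module into `⨁ i, M i` meets only
finitely many summands, so it is the finite sum of its components, and each component factors
through `σ` separately.
-/

universe u

open DirectSum

theorem DirectSum.exists_finset_apply_eq_zero_of_finite {R : Type*} [Ring R] {A : Type*}
    [AddCommGroup A] [Module R A] [Module.Finite R A] {ι : Type*} {M : ι → Type*}
    [∀ i, AddCommGroup (M i)] [∀ i, Module R (M i)] (f : A →ₗ[R] ⨁ i, M i) :
    ∃ S : Finset ι, ∀ i ∉ S, ∀ x, f x i = 0 := by
  classical
  obtain ⟨s, hs⟩ : (⊤ : Submodule R A).FG := Module.Finite.fg_top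
  refine ⟨s.sup fun x => (f x).support, fun i hi => ?_⟩
  have hzero : (component R ι M i).comp f = 0 :=
    LinearMap.ext_on hs fun x hx =>
      DFinsupp.notMem_support_iff.mp fun hix => hi (Finset.mem_sup.mpr ⟨x, hx, hix⟩)
  exact fun x => LinearMap.congr_fun hzero x

namespace MemD

variable {R : Type u} [Ring R] {A B : Type u} [AddCommGroup A] [Module R A]
  [AddCommGroup B] [Module R B] {σ : A →ₗ[R] B}

theorem submodule (hσ : Function.Surjective σ) {M : Type u} [AddCommGroup M] [Module R M]
    (hM : MemD σ M) (N : Submodule R M) : MemD σ N := by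
  intro f
  obtain ⟨g, hg⟩ := hM (N.subtype.comp f)
  have hgN : ∀ y, g y ∈ N := by
    intro y
    obtain ⟨x, rfl⟩ := hσ y
    rw [← LinearMap.comp_apply, hg]
    exact (f x).2
  exact ⟨g.codRestrict N hgN, LinearMap.ext fun x => Subtype.ext (LinearMap.congr_fun hg x)⟩

theorem directSum [Module.Finite R A] {ι : Type u} {M : ι → Type u}
    [∀ i, AddCommGroup (M i)] [∀ i, Module R (M i)] (hM : ∀ i, MemD σ (M i)) :
    MemD σ (⨁ i, M i) := by
  classical
  intro f
  obtain ⟨S, hS⟩ := DirectSum.exists_finset_apply_eq_zero_of_finite f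
  choose g hg using fun i => hM i ((component R ι M i).comp f)
  refine ⟨∑ i ∈ S, (lof R ι M i).comp (g i), LinearMap.ext fun x => ?_⟩
  have hsupp : (f x).support ⊆ S := fun i hi =>
    of_not_not fun hiS => DFinsupp.mem_support_iff.mp hi (hS i hiS x)
  calc (∑ i ∈ S, (lof R ι M i).comp (g i)).comp σ x
      = ∑ i ∈ S, lof R ι M i (f x i) := by
        simp only [LinearMap.comp_apply, LinearMap.sum_apply, ← LinearMap.comp_apply (g _) σ, hg]
        rfl
    _ = f x := by
        rw [← DFinsupp.sum_of_support_subset hsupp fun i _ => map_zero _]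
        exact DFinsupp.sum_single

end MemD

theorem stmt_3_general {R : Type u} [Ring R]
    (P G : Type u) [AddCommGroup P] [Module R P] [AddCommGroup G] [Module R G]
    [Module.Finite R P]
    (σ' : P →ₗ[R] G) (hσ' : Function.Surjective σ') :
    (∀ (M : Type u) [AddCommGroup M] [Module R M] (N : Submodule R M),
        MemD σ' M → MemD σ' N) ∧
    (∀ (ι : Type u) (Mᵢ : ι → Type u) [∀ i, AddCommGroup (Mᵢ i)] [∀ i, Module R (Mᵢ i)],
        (∀ i, MemD σ' (Mᵢ i)) → MemD σ' (⨁ i, Mᵢ i)) :=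
  ⟨fun _ _ _ N hM => hM.submodule hσ' N, fun _ _ _ _ hM => MemD.directSum hM⟩

/-- For `P` finitely generated projective and `σ' : P → G` surjective, the class `D_{σ'}`
is closed under submodules and under arbitrary direct sums. -/
theorem stmt_3 {R : Type u} [Ring R]
    (P G : Type u) [AddCommGroup P] [Module R P] [AddCommGroup G] [Module R G]
    [Module.Finite R P] [Module.Projective R P]
    (σ' : P →ₗ[R] G) (hσ' : Function.Surjective σ') :
    (∀ (M : Type u) [AddCommGroup M] [Module R M] (N : Submodule R M),
        MemD σ' M → MemD σ' N) ∧
    (∀ (ι : Type u) (Mᵢ : ι → Type u) [∀ i, AddCommGroup (Mᵢ i)] [∀ i, Module R (Mᵢ i)],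
        (∀ i, MemD σ' (Mᵢ i)) → MemD σ' (⨁ i, Mᵢ i)) :=
  stmt_3_general P G σ' hσ'
end

section
/- Let R be a commutative ring and σ : P₋₁ → P₀ an R-linear map between projective R-modules, with induced map σ⁺ : P₀⁺ → P₋₁⁺ between character modules. Then for every R-module X the following are equivalent: (a) σ ⊗_R id_X : P₋₁ ⊗_R X → P₀ ⊗_R X is injective; (b) every R-linear map X → P₋₁⁺ factors through σ⁺; (c) every R-linear map P₋₁ → X⁺ factors through σ. -/
universe u

/-- `X ∈ C_λ`: every `R`-linear map `X → E₁` factors through `λ : E₀ → E₁`. -/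
def MemC {R : Type u} [Ring R] {E₀ E₁ : Type u} [AddCommGroup E₀] [Module R E₀]
    [AddCommGroup E₁] [Module R E₁] (lam : E₀ →ₗ[R] E₁)
    (X : Type u) [AddCommGroup X] [Module R X] : Prop :=
  ∀ f : X →ₗ[R] E₁, ∃ g : X →ₗ[R] E₀, lam.comp g = f

/-- Flip a map `X → P⁺` into a map `P → X⁺`. -/
def charFlip {R : Type u} [CommRing R] {X P : Type u} [AddCommGroup X] [Module R X]
    [AddCommGroup P] [Module R P]
    (f : X →ₗ[R] CharacterModule P) : P →ₗ[R] CharacterModule X where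
  toFun p :=
    { toFun := fun x => f x p
      map_zero' := by show (f 0) p = 0; rw [map_zero]; rfl
      map_add' := by intro x y; show (f (x + y)) p = _; rw [map_add]; rfl }
  map_add' p q := by
    ext x
    show (f x) (p + q) = (f x) p + (f x) q
    exact map_add (f x) p q
  map_smul' r p := by
    ext x
    exact (DFunLike.congr_fun (f.map_smul r x) p).symm

/-- For `σ : P₋₁ → P₀` between projective modules over a commutative ring and any module
`X`: `σ ⊗ id_X` is injective iff every map `X → P₋₁⁺` factors through
`σ⁺ : P₀⁺ → P₋₁⁺` iff every map `P₋₁ → X⁺` factors through `σ`. -/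
theorem stmt_5 {R : Type u} [CommRing R]
    (P₁ P₀ : Type u) [AddCommGroup P₁] [Module R P₁] [AddCommGroup P₀] [Module R P₀]
    [Module.Projective R P₁] [Module.Projective R P₀] (σ : P₁ →ₗ[R] P₀)
    (X : Type u) [AddCommGroup X] [Module R X] :
    (Function.Injective (LinearMap.rTensor X σ) ↔
      MemC (CharacterModule.dual σ) X) ∧
    (MemC (CharacterModule.dual σ) X ↔ MemD σ (CharacterModule X)) := by
  have hbc : MemC (CharacterModule.dual σ) X ↔ MemD σ (CharacterModule X) := by
    constructor
    · intro h f
      obtain ⟨g, hg⟩ := h (charFlip f)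
      refine ⟨charFlip g, ?_⟩
      ext p x
      exact DFunLike.congr_fun (DFunLike.congr_fun hg x) p
    · intro h f
      obtain ⟨g, hg⟩ := h (charFlip f)
      refine ⟨charFlip g, ?_⟩
      ext x p
      exact DFunLike.congr_fun (DFunLike.congr_fun hg p) x
  refine ⟨?_, hbc⟩
  rw [rTensor_injective_iff_lcomp_surjective, hbc]
  constructor
  · intro h f
    obtain ⟨g, hg⟩ := h f
    exact ⟨g, hg⟩
  · intro h f
    obtain ⟨g, hg⟩ := h f
    exact ⟨g, hg⟩
end

section
/- Let R be a commutative ring and T a silting R-module with respect to a projective presentation P₋₁ →σ P₀ → T → 0 (so Gen T = D_σ). Then: the character modules P₀⁺ and P₋₁⁺ are injective R-modules; the kernel of σ⁺ : P₀⁺ → P₋₁⁺ is isomorphic to T⁺; and Cogen(T⁺) = C_{σ⁺}. Hence T⁺ is a cosilting R-module with respect to the injective copresentation 0 → T⁺ → P₀⁺ →σ⁺ P₋₁⁺. -/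
/-!
Over a commutative ring `(-)⁺ = Hom_ℤ(-, ℚ/ℤ)` is exact and turns flat (in particular projective)
modules into injective ones, which gives the injective copresentation `0 → T⁺ → P₀⁺ → P₋₁⁺`.
Transposing `Hom(X, P⁺) ≅ Hom(P, X⁺)` shows `X ∈ C_{σ⁺}` iff `X⁺ ∈ D_σ`.
If `X ∈ C_{σ⁺}`, then `X⁺ ∈ D_σ = Gen T`, so `X ⊆ X⁺⁺ ⊆ (T^(I))⁺ ≅ (T⁺)^I`.
Conversely `M = T^(I) ∈ D_σ`, i.e. `σ^* : Hom(P₀, M) → Hom(P₋₁, M)` is onto, so its dual is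
injective; since for projective `P` the natural map `P ⊗ M⁺ → Hom(P, M)⁺` is injective, so is
`σ ⊗ M⁺`, which says exactly that `M⁺ ≅ (T⁺)^I` lies in `C_{σ⁺}`. Finally `C_{σ⁺}` is closed under
submodules because `P₋₁⁺` is injective.
-/

universe u

/-- `M ∈ Gen T`: `M` is an epimorphic image of a direct sum of copies of `T`. -/
def MemGen (R : Type u) [Ring R] (T : Type u) [AddCommGroup T] [Module R T]
    (M : Type u) [AddCommGroup M] [Module R M] : Prop :=
  ∃ (ι : Type u) (g : (ι →₀ T) →ₗ[R] M), Function.Surjective g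

/-- `M ∈ Cogen C`: `M` embeds into a direct product of copies of `C`. -/
def MemCogen (R : Type u) [Ring R] (C : Type u) [AddCommGroup C] [Module R C]
    (M : Type u) [AddCommGroup M] [Module R M] : Prop :=
  ∃ (ι : Type u) (g : M →ₗ[R] (ι → C)), Function.Injective g

open TensorProduct

namespace CharacterModule

variable {R : Type*} [CommRing R] {A B C : Type*} [AddCommGroup A] [Module R A]
  [AddCommGroup B] [Module R B] [AddCommGroup C] [Module R C]

lemma exact_dual {f : A →ₗ[R] B} {g : B →ₗ[R] C} (hfg : Function.Exact f g)
    (hg : Function.Surjective g) : Function.Exact (dual g) (dual f) := by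
  intro c
  -- Characters are `ℤ`-linear maps to `ℚ/ℤ`: this is left exactness of `Hom_ℤ(-, ℚ/ℤ)`.
  have hZ := LinearMap.exact_lcomp_of_exact_of_surjective (AddCircle (1 : ℚ))
    (f := f.toAddMonoidHom.toIntLinearMap) (g := g.toAddMonoidHom.toIntLinearMap) hfg hg
    c.toIntLinearMap
  simp only [Set.mem_range] at hZ ⊢
  constructor
  · intro hc
    obtain ⟨d, hd⟩ := hZ.mp (LinearMap.ext fun a => DFunLike.congr_fun hc a)
    exact ⟨d.toAddMonoidHom, DFunLike.ext _ _ fun b => DFunLike.congr_fun hd b⟩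
  · rintro ⟨d, rfl⟩
    ext a
    exact DFunLike.congr_fun (hZ.mpr ⟨d.toIntLinearMap, rfl⟩) a

noncomputable def flipEquiv : (A →ₗ[R] CharacterModule B) ≃ₗ[R] (B →ₗ[R] CharacterModule A) :=
  homEquiv ≪≫ₗ congr (TensorProduct.comm R A B) ≪≫ₗ homEquiv.symm

@[simp] lemma flipEquiv_flipEquiv (f : A →ₗ[R] CharacterModule B) :
    flipEquiv (flipEquiv f) = f := rfl

lemma flipEquiv_dual_comp (f : B →ₗ[R] C) (g : A →ₗ[R] CharacterModule C) :
    flipEquiv (dual f ∘ₗ g) = flipEquiv g ∘ₗ f := rfl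

variable (R A) in
noncomputable def eval : A →ₗ[R] CharacterModule (CharacterModule A) :=
  flipEquiv LinearMap.id

lemma eval_injective : Function.Injective (eval R A) :=
  (injective_iff_map_eq_zero _).mpr fun _ ha =>
    eq_zero_of_character_apply fun c => DFunLike.congr_fun ha c

noncomputable def finsuppEquiv (ι : Type*) :
    CharacterModule (ι →₀ A) ≃ₗ[R] (ι → CharacterModule A) :=
  AddEquiv.toLinearEquiv
    (Finsupp.liftAddHom.symm : CharacterModule (ι →₀ A) ≃+ (ι → CharacterModule A))
    fun r c => by
      funext i
      ext a
      show c (r • Finsupp.single i a) = c (Finsupp.single i (r • a))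
      rw [Finsupp.smul_single]

variable (R) in
noncomputable def tensorDualToDualHom (P M : Type*) [AddCommGroup P] [Module R P]
    [AddCommGroup M] [Module R M] :
    P ⊗[R] CharacterModule M →ₗ[R] CharacterModule (P →ₗ[R] M) :=
  TensorProduct.lift <| LinearMap.mk₂ R (fun p χ => dual (LinearMap.applyₗ p) χ)
    (fun p p' χ => by ext f; exact (congr_arg χ (f.map_add p p')).trans (χ.map_add _ _))
    (fun r p χ => by ext f; exact congr_arg χ (f.map_smul r p))
    (fun _ _ _ => rfl) (fun _ _ _ => rfl)

section tensorDualToDualHom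

variable {P P' M : Type*} [AddCommGroup P] [Module R P] [AddCommGroup P'] [Module R P']
  [AddCommGroup M] [Module R M]

@[simp] lemma tensorDualToDualHom_tmul (p : P) (χ : CharacterModule M) (f : P →ₗ[R] M) :
    tensorDualToDualHom R P M (p ⊗ₜ χ) f = χ (f p) := rfl

lemma dual_lcomp_comp_tensorDualToDualHom (f : P →ₗ[R] P') :
    dual (f.lcomp R M) ∘ₗ tensorDualToDualHom R P M =
      tensorDualToDualHom R P' M ∘ₗ f.rTensor (CharacterModule M) :=
  TensorProduct.ext' fun _ _ => rfl

variable (M) in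
lemma tensorDualToDualHom_injective_of_free (κ : Type*) :
    Function.Injective (tensorDualToDualHom R (κ →₀ R) M) := by
  classical
  have coord (t : (κ →₀ R) ⊗[R] CharacterModule M) (k : κ) (m : M) :
      tensorDualToDualHom R _ M t (LinearMap.toSpanSingleton R M m ∘ₗ Finsupp.lapply k) =
        finsuppScalarLeft R (CharacterModule M) κ t k m := by
    induction t using TensorProduct.induction_on with
    | zero => rw [map_zero, map_zero]; rfl
    | tmul p χ => simp
    | add x y hx hy => rw [map_add, map_add]; exact congr_arg₂ (· + ·) hx hy
  intro t t' h
  apply (finsuppScalarLeft R (CharacterModule M) κ).injective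
  ext k m
  rw [← coord, ← coord, h]

variable (P M) in
lemma tensorDualToDualHom_injective [Module.Projective R P] :
    Function.Injective (tensorDualToDualHom R P M) := by
  obtain ⟨s, hs⟩ := Module.projective_def'.mp ‹Module.Projective R P›
  have hs_inj : Function.Injective (s.rTensor (CharacterModule M)) :=
    Function.LeftInverse.injective (g := (Finsupp.linearCombination R id).rTensor _) fun x => by
      rw [← LinearMap.comp_apply, ← LinearMap.rTensor_comp, hs, LinearMap.rTensor_id,
        LinearMap.id_apply]
  refine Function.Injective.of_comp (f := dual (s.lcomp R M)) ?_
  rw [← LinearMap.coe_comp, dual_lcomp_comp_tensorDualToDualHom, LinearMap.coe_comp]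
  exact (tensorDualToDualHom_injective_of_free M P).comp hs_inj

lemma rTensor_dual_injective_of_lcomp_surjective [Module.Projective R P] {σ : P →ₗ[R] P'}
    (hσ : Function.Surjective (σ.lcomp R M)) :
    Function.Injective (σ.rTensor (CharacterModule M)) := by
  refine Function.Injective.of_comp (f := tensorDualToDualHom R P' M) ?_
  rw [← LinearMap.coe_comp, ← dual_lcomp_comp_tensorDualToDualHom, LinearMap.coe_comp]
  exact (dual_injective_of_surjective _ hσ).comp (tensorDualToDualHom_injective P M)

end tensorDualToDualHom

end CharacterModule

open CharacterModule

section Classes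

variable {R : Type u} [CommRing R] {P₁ P₀ M X Y : Type u} [AddCommGroup P₁] [Module R P₁]
  [AddCommGroup P₀] [Module R P₀] [AddCommGroup M] [Module R M] [AddCommGroup X] [Module R X]
  [AddCommGroup Y] [Module R Y]

lemma memD_iff_surjective_lcomp (σ : P₁ →ₗ[R] P₀) :
    MemD σ M ↔ Function.Surjective (σ.lcomp R M) :=
  Iff.rfl

lemma memC_dual_iff_memD_dual (σ : P₁ →ₗ[R] P₀) :
    MemC (dual σ) X ↔ MemD σ (CharacterModule X) := by
  constructor
  · intro hX f
    obtain ⟨g, hg⟩ := hX (flipEquiv f)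
    exact ⟨flipEquiv g, by rw [← flipEquiv_dual_comp, hg, flipEquiv_flipEquiv]⟩
  · intro hX f
    obtain ⟨g, hg⟩ := hX (flipEquiv f)
    exact ⟨flipEquiv g, flipEquiv.injective <| by rw [flipEquiv_dual_comp, flipEquiv_flipEquiv, hg]⟩

lemma MemD.memC_dual [Module.Projective R P₁] {σ : P₁ →ₗ[R] P₀} (hM : MemD σ M) :
    MemC (dual σ) (CharacterModule M) := by
  rw [memC_dual_iff_memD_dual, memD_iff_surjective_lcomp,
    ← rTensor_injective_iff_lcomp_surjective]
  exact rTensor_dual_injective_of_lcomp_surjective hM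

lemma MemC.of_injective [Module.Injective R P₁] {lam : P₀ →ₗ[R] P₁} (hY : MemC lam Y)
    (i : X →ₗ[R] Y) (hi : Function.Injective i) : MemC lam X := by
  intro f
  obtain ⟨F, hF⟩ := Module.Injective.extension_property R P₁ X Y i hi f
  obtain ⟨G, hG⟩ := hY F
  exact ⟨G ∘ₗ i, by rw [← LinearMap.comp_assoc, hG, hF]⟩

lemma MemCogen.of_injective {C : Type u} [AddCommGroup C] [Module R C] (hY : MemCogen R C Y)
    (i : X →ₗ[R] Y) (hi : Function.Injective i) : MemCogen R C X := by
  obtain ⟨ι, g, hg⟩ := hY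
  exact ⟨ι, g ∘ₗ i, hg.comp hi⟩

lemma MemGen.memCogen_dual {T : Type u} [AddCommGroup T] [Module R T] (hM : MemGen R T M) :
    MemCogen R (CharacterModule T) (CharacterModule M) := by
  obtain ⟨ι, g, hg⟩ := hM
  exact ⟨ι, (finsuppEquiv (R := R) ι).toLinearMap ∘ₗ dual g,
    (finsuppEquiv (R := R) ι).injective.comp (dual_injective_of_surjective g hg)⟩

end Classes

/-- If `T` is silting with respect to the projective presentation
`P₋₁ →σ P₀ →π T → 0`, then `T⁺` is cosilting with respect to the injective
copresentation `0 → T⁺ →π⁺ P₀⁺ →σ⁺ P₋₁⁺`, and `Cogen T⁺ = C_{σ⁺}`. -/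
theorem stmt_7 {R : Type u} [CommRing R]
    (P₁ P₀ T : Type u) [AddCommGroup P₁] [Module R P₁] [AddCommGroup P₀] [Module R P₀]
    [AddCommGroup T] [Module R T]
    [Module.Projective R P₁] [Module.Projective R P₀]
    (σ : P₁ →ₗ[R] P₀) (π : P₀ →ₗ[R] T)
    (hsurj : Function.Surjective π) (hexact : LinearMap.ker π = LinearMap.range σ)
    (hsilting : ∀ (M : Type u) [AddCommGroup M] [Module R M], MemGen R T M ↔ MemD σ M) :
    Module.Injective R (CharacterModule P₀) ∧
    Module.Injective R (CharacterModule P₁) ∧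
    Function.Injective (CharacterModule.dual π) ∧
    LinearMap.ker (CharacterModule.dual σ) = LinearMap.range (CharacterModule.dual π) ∧
    ∀ (X : Type u) [AddCommGroup X] [Module R X],
      MemCogen R (CharacterModule T) X ↔ MemC (CharacterModule.dual σ) X := by
  have hP₁ : Module.Injective R (CharacterModule P₁) :=
    Module.Flat.iff_characterModule_injective.mp inferInstance
  refine ⟨Module.Flat.iff_characterModule_injective.mp inferInstance, hP₁,
    dual_injective_of_surjective π hsurj,
    (exact_dual (LinearMap.exact_iff.mpr hexact) hsurj).linearMap_ker_eq,
    fun X _ _ => ⟨fun ⟨ι, g, hg⟩ => ?_, fun hX => ?_⟩⟩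
  · have hD : MemD σ (ι →₀ T) := (hsilting _).mp ⟨ι, LinearMap.id, Function.surjective_id⟩
    exact hD.memC_dual.of_injective ((finsuppEquiv (R := R) ι).symm.toLinearMap ∘ₗ g)
      ((finsuppEquiv (R := R) ι).symm.injective.comp hg)
  · have hG : MemGen R T (CharacterModule X) :=
      (hsilting _).mpr ((memC_dual_iff_memD_dual σ).mp hX)
    exact hG.memCogen_dual.of_injective (eval R X) eval_injective
end

section
/- Let R be a commutative ring and σ : P₋₁ → P₀ an R-linear map between finitely generated projective R-modules. Let M be an R-module such that σ ⊗_R id_M : P₋₁ ⊗_R M → P₀ ⊗_R M is injective, and let ι : M → E be an injective R-linear map into an injective R-module E whose image ι(M) is an essential submodule of E (every nonzero submodule of E has nonzero intersection with ι(M)). Then σ ⊗_R id_E : P₋₁ ⊗_R E → P₀ ⊗_R E is injective. -/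
universe u

open TensorProduct LinearMap

/-- coordinate map -/
private noncomputable def coordE {R : Type u} [CommRing R] (E : Type u) [AddCommGroup E] [Module R E]
    (n : ℕ) (i : Fin n) : ((Fin n → R) ⊗[R] E) →ₗ[R] E :=
  TensorProduct.lift ((LinearMap.lsmul R E).comp (LinearMap.proj i))

private lemma decompE {R : Type u} [CommRing R] (E : Type u) [AddCommGroup E] [Module R E]
    (n : ℕ) (x : (Fin n → R) ⊗[R] E) :
    x = ∑ i : Fin n, (Pi.single i (1:R)) ⊗ₜ[R] (coordE E n i x) := by
  induction x using TensorProduct.induction_on with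
  | zero => simp
  | tmul f e =>
      have : ∀ i : Fin n, coordE E n i (f ⊗ₜ[R] e) = f i • e := fun i => rfl
      simp_rw [this]
      calc f ⊗ₜ[R] e = (∑ i : Fin n, Pi.single i (f i)) ⊗ₜ[R] e := by
            rw [Finset.univ_sum_single]
        _ = ∑ i : Fin n, (Pi.single i (f i)) ⊗ₜ[R] e := by rw [TensorProduct.sum_tmul]
        _ = ∑ i : Fin n, (Pi.single i (1:R)) ⊗ₜ[R] (f i • e) := by
            refine Finset.sum_congr rfl fun i _ => ?_
            have h1 : (Pi.single i (f i) : Fin n → R) = f i • (Pi.single i (1:R) : Fin n → R) := by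
              ext j; by_cases h : j = i <;> simp [Pi.single_apply, h]
            rw [h1, TensorProduct.smul_tmul]
  | add a b ha hb =>
      conv_lhs => rw [ha, hb]
      simp [map_add, tmul_add, Finset.sum_add_distrib]

/-- If `σ ⊗ id_M` is injective and `M` embeds as an essential submodule of an injective
module `E`, then `σ ⊗ id_E` is injective. -/
theorem stmt_12 {R : Type u} [CommRing R]
    (P₁ P₀ : Type u) [AddCommGroup P₁] [Module R P₁] [AddCommGroup P₀] [Module R P₀]
    [Module.Finite R P₁] [Module.Projective R P₁]
    [Module.Finite R P₀] [Module.Projective R P₀]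
    (σ : P₁ →ₗ[R] P₀)
    (M E : Type u) [AddCommGroup M] [Module R M] [AddCommGroup E] [Module R E]
    [Module.Injective R E]
    (hM : Function.Injective (LinearMap.rTensor M σ))
    (ι : M →ₗ[R] E) (hι : Function.Injective ι)
    (hess : ∀ N : Submodule R E, N ≠ ⊥ → N ⊓ LinearMap.range ι ≠ ⊥) :
    Function.Injective (LinearMap.rTensor E σ) := by
  -- cyclic form of essentiality
  have hcyc : ∀ e : E, e ≠ 0 → ∃ r : R, r • e ≠ 0 ∧ r • e ∈ LinearMap.range ι := by
    intro e he
    have h1 : Submodule.span R {e} ≠ ⊥ := by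
      simpa [Submodule.span_singleton_eq_bot] using he
    have h2 := hess _ h1
    obtain ⟨z, hz, hz0⟩ := Submodule.exists_mem_ne_zero_of_ne_bot h2
    obtain ⟨hz1, hz2⟩ := hz
    obtain ⟨r, rfl⟩ := Submodule.mem_span_singleton.mp hz1
    exact ⟨r, hz0, hz2⟩
  -- essentiality for finite powers
  have hpi : ∀ (n : ℕ) (y : Fin n → E), y ≠ 0 →
      ∃ r : R, (∀ i, r • y i ∈ LinearMap.range ι) ∧ ∃ i, r • y i ≠ 0 := by
    intro n
    induction n with
    | zero => intro y hy; exact absurd (funext fun i => i.elim0) hy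
    | succ n ih =>
      intro y hy
      by_cases ht : (fun i : Fin n => y i.succ) = 0
      · have hy0 : y 0 ≠ 0 := by
          intro h0
          apply hy
          funext i
          refine Fin.cases h0 (fun j => ?_) i
          exact congrFun ht j
        obtain ⟨r, hr0, hrm⟩ := hcyc _ hy0
        refine ⟨r, fun i => ?_, ⟨0, hr0⟩⟩
        refine Fin.cases hrm (fun j => ?_) i
        have : y j.succ = 0 := congrFun ht j
        rw [this, smul_zero]; exact Submodule.zero_mem _
      · obtain ⟨r', hmem, j, hj⟩ := ih _ ht
        by_cases he : r' • y 0 ∈ LinearMap.range ι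
        · exact ⟨r', fun i => Fin.cases he (fun k => hmem k) i, ⟨j.succ, hj⟩⟩
        · have hne : r' • y 0 ≠ 0 := by
            intro h; rw [h] at he; exact he (Submodule.zero_mem _)
          obtain ⟨s, hs0, hsm⟩ := hcyc _ hne
          refine ⟨s * r', fun i => ?_, ⟨0, by rwa [mul_smul]⟩⟩
          refine Fin.cases (by rwa [mul_smul]) (fun k => ?_) i
          rw [mul_smul]
          exact Submodule.smul_mem _ s (hmem k)
  -- write P₁ as a retract of (Fin n → R)
  obtain ⟨n, p, hp⟩ := Module.Finite.exists_fin' R P₁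
  obtain ⟨s, hs⟩ := Module.projective_lifting_property p (.id) hp
  rw [← LinearMap.ker_eq_bot]
  rw [Submodule.eq_bot_iff]
  intro x hx
  by_contra hx0
  have hx' : LinearMap.rTensor E σ x = 0 := hx
  -- push x into (Fin n → R) ⊗ E
  set X := LinearMap.rTensor E s x with hX
  have hpsX : LinearMap.rTensor E p X = x := by
    rw [hX, ← LinearMap.comp_apply, ← LinearMap.rTensor_comp, hs]
    simp
  have hX0 : X ≠ 0 := by
    intro h; rw [h, map_zero] at hpsX; exact hx0 hpsX.symm
  set y : Fin n → E := fun i => coordE E n i X with hy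
  have hy0 : y ≠ 0 := by
    intro h
    apply hX0
    rw [decompE E n X]
    have : ∀ i : Fin n, coordE E n i X = 0 := fun i => congrFun h i
    simp [this]
  obtain ⟨r, hmem, i₀, hi₀⟩ := hpi n y hy0
  choose m hm using fun i => hmem i
  set z₀ : (Fin n → R) ⊗[R] M := ∑ i : Fin n, (Pi.single i (1:R)) ⊗ₜ[R] (m i) with hz₀
  have hz₀X : LinearMap.lTensor (Fin n → R) ι z₀ = r • X := by
    rw [hz₀, map_sum]
    have : ∀ i : Fin n, LinearMap.lTensor (Fin n → R) ι ((Pi.single i (1:R)) ⊗ₜ[R] (m i))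
        = (Pi.single i (1:R)) ⊗ₜ[R] (r • y i) := by
      intro i; rw [LinearMap.lTensor_tmul, hm]
    simp_rw [this]
    have := decompE E n (r • X)
    rw [this]
    refine Finset.sum_congr rfl fun i _ => ?_
    congr 1
    rw [hy]
    simp [map_smul]
  -- pull back to P₁ ⊗ M
  set z : P₁ ⊗[R] M := LinearMap.rTensor M p z₀ with hz
  have hzx : LinearMap.lTensor P₁ ι z = r • x := by
    rw [hz, ← LinearMap.comp_apply, LinearMap.lTensor_comp_rTensor, ← LinearMap.rTensor_comp_lTensor,
      LinearMap.comp_apply, hz₀X, map_smul, hpsX]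
  have hrx0 : r • x ≠ 0 := by
    intro h
    have : r • X = 0 := by
      rw [hX, ← map_smul, h, map_zero]
    apply hi₀
    rw [hy]
    rw [← map_smul]
    rw [show r • X = 0 from this, map_zero]
  have hz0 : z ≠ 0 := by
    intro h; rw [h, map_zero] at hzx; exact hrx0 hzx.symm
  have : LinearMap.lTensor P₀ ι (LinearMap.rTensor M σ z) = 0 := by
    rw [← LinearMap.comp_apply, LinearMap.lTensor_comp_rTensor, ← LinearMap.rTensor_comp_lTensor,
      LinearMap.comp_apply, hzx, map_smul, hx', smul_zero]
  have hinj : Function.Injective (LinearMap.lTensor P₀ ι) :=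
    Module.Flat.lTensor_preserves_injective_linearMap ι hι
  have : LinearMap.rTensor M σ z = 0 := by
    apply hinj; rw [this, map_zero]
  have : z = 0 := by
    apply hM; rw [this, map_zero]
  exact hz0 this
end

section
/- Let R be a commutative noetherian ring and (T, F) a torsion pair in Mod-R. Then (T, F) is of finite type (i.e. F is closed under direct limits of directed systems) if and only if (T, F) is hereditary (i.e. T is closed under submodules). -/
/-!
Hereditary ⇒ finite type: a map from a torsion module `S` to `lim Gᵢ` sends `s` to an element
killed by the finitely generated ideal `ann s`, so it comes from some `z ∈ G_k` already killed by
`ann s`. The map `R ⧸ ann s → G_k`, `1 ↦ z`, starts at a torsion module (`R ⧸ ann s ≅ R s ≤ S`),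
so `z = 0`.

Finite type ⇒ hereditary: if `N ≤ M` with `M` torsion and `f : N → Y` is nonzero at `n` with `Y`
torsion-free, choose an associated prime `q ⊇ ann (f n)` of `Y`; then `R ⧸ q ↪ Y` is torsion-free.
The injective hull `E` of `R ⧸ q` is the union of the submodules `Eₙ` killed by `qⁿ`, and
`Eₙ₊₁ / Eₙ` is a torsion-free `R ⧸ q`-module, hence embeds in a product of copies of the fraction
field of `R ⧸ q`, which is a directed union of copies of `R ⧸ q`. Closure of `F` under direct
limits, products, submodules and extensions gives `E ∈ F`. But `R n ≅ R ⧸ ann n ↠ R ⧸ q ↪ E`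
extends to a nonzero map `M → E`.
-/

abbrev ModuleClass (R : Type u) [CommRing R] : Type (u + 1) :=
  ∀ (M : Type u) [AddCommGroup M] [Module R M], Prop

section ModuleClass

variable {R : Type u} [CommRing R]

def IsClosedUnderDirectLimits (F : ModuleClass R) : Prop :=
  ∀ (ι : Type u) [Preorder ι] [IsDirected ι (· ≤ ·)] [DecidableEq ι]
    (G : ι → Type u) [∀ i, AddCommGroup (G i)] [∀ i, Module R (G i)]
    (f : ∀ i j, i ≤ j → G i →ₗ[R] G j) [DirectedSystem G fun i j h => f i j h],
    (∀ i, F (G i)) → F (Module.DirectLimit G f)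

def IsClosedUnderSubmodules (T : ModuleClass R) : Prop :=
  ∀ (M : Type u) [AddCommGroup M] [Module R M] (N : Submodule R M), T M → T N

section TorsionFreeClass

variable {T F : ModuleClass R}
  (hF : ∀ (M : Type u) [AddCommGroup M] [Module R M],
    F M ↔ ∀ (N : Type u) [AddCommGroup N] [Module R N], T N → ∀ f : N →ₗ[R] M, f = 0)
include hF

variable {M Y : Type u} [AddCommGroup M] [Module R M] [AddCommGroup Y] [Module R Y]

theorem torsionFree_of_injective {e : M →ₗ[R] Y} (he : Function.Injective e) (hY : F Y) :
    F M := by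
  refine (hF M).2 fun N _ _ hN g => LinearMap.ext fun x => he ?_
  simpa using LinearMap.congr_fun ((hF Y).1 hY N hN (e ∘ₗ g)) x

theorem torsionFree_of_linearEquiv (e : M ≃ₗ[R] Y) (hM : F M) : F Y :=
  torsionFree_of_injective hF e.symm.injective hM

theorem torsionFree_of_subsingleton [Subsingleton M] : F M :=
  (hF M).2 fun _ _ _ _ _ => Subsingleton.elim _ _

theorem torsionFree_pi {ι : Type u} (W : ι → Type u) [∀ i, AddCommGroup (W i)]
    [∀ i, Module R (W i)] (hW : ∀ i, F (W i)) : F (∀ i, W i) := by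
  refine (hF _).2 fun N _ _ hN g => LinearMap.ext fun x => funext fun i => ?_
  simpa using LinearMap.congr_fun ((hF _).1 (hW i) N hN (LinearMap.proj i ∘ₗ g)) x

theorem torsionFree_of_submodule_of_quotient (K : Submodule R M) (hK : F K) (hQ : F (M ⧸ K)) :
    F M := by
  refine (hF M).2 fun N _ _ hN g => ?_
  have hgK : ∀ x, g x ∈ K := fun x => by
    simpa [Submodule.Quotient.mk_eq_zero] using
      LinearMap.congr_fun ((hF _).1 hQ N hN (K.mkQ ∘ₗ g)) x
  ext x
  simpa using congrArg Subtype.val (LinearMap.congr_fun ((hF K).1 hK N hN (g.codRestrict K hgK)) x)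

end TorsionFreeClass

theorem torsion_of_linearEquiv {T F : ModuleClass R}
    (hT : ∀ (M : Type u) [AddCommGroup M] [Module R M],
      T M ↔ ∀ (N : Type u) [AddCommGroup N] [Module R N], F N → ∀ f : M →ₗ[R] N, f = 0)
    {M Y : Type u} [AddCommGroup M] [Module R M] [AddCommGroup Y] [Module R Y]
    (e : M ≃ₗ[R] Y) (hM : T M) : T Y := by
  refine (hT Y).2 fun N _ _ hN g => LinearMap.ext fun y => ?_
  simpa using LinearMap.congr_fun ((hT M).1 hM N hN (g ∘ₗ e.toLinearMap)) (e.symm y)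

end ModuleClass

namespace Module.DirectLimit

variable {R : Type u} [CommRing R] {ι : Type u} [Preorder ι] [IsDirected ι (· ≤ ·)]
  [DecidableEq ι] [Nonempty ι] {G : ι → Type u} [∀ i, AddCommGroup (G i)] [∀ i, Module R (G i)]
  {f : ∀ i j, i ≤ j → G i →ₗ[R] G j} [DirectedSystem G fun i j h => f i j h]

theorem exists_of_le_torsionOf {I : Ideal R} (hI : I.FG) {x : DirectLimit G f}
    (hx : I ≤ Ideal.torsionOf R _ x) :
    ∃ k z, of R ι G f k z = x ∧ I ≤ Ideal.torsionOf R (G k) z := by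
  obtain ⟨gens, rfl⟩ := hI
  obtain ⟨i, y, rfl⟩ := exists_of x
  have hkill : ∀ r : gens, ∃ j, ∃ hij : i ≤ j, f i j hij ((r : R) • y) = 0 := fun r =>
    of.zero_exact <| by rw [map_smul]; exact hx (Submodule.subset_span r.2)
  choose j hij hj using hkill
  obtain ⟨k, hk⟩ := (insert i (Finset.univ.image j)).exists_le
  have hik : i ≤ k := hk i (Finset.mem_insert_self _ _)
  refine ⟨k, f i k hik y, of_f, Submodule.span_le.2 fun r hr => ?_⟩
  have hjk : j ⟨r, hr⟩ ≤ k :=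
    hk _ (Finset.mem_insert_of_mem (Finset.mem_image_of_mem _ (Finset.mem_univ _)))
  show r • f i k hik y = 0
  rw [← map_smul, ← DirectedSystem.map_map (f := f) (hij ⟨r, hr⟩) hjk, hj, map_zero]

end Module.DirectLimit

theorem Submodule.mem_torsionBySet_ideal_iff {R M : Type*} [CommRing R] [AddCommGroup M]
    [Module R M] {I : Ideal R} {x : M} :
    x ∈ Submodule.torsionBySet R M I ↔ I ≤ Ideal.torsionOf R M x := by
  simp [Submodule.mem_torsionBySet_iff, SetLike.le_def, Ideal.mem_torsionOf_iff]

/-- Elementwise form of "every nonzero submodule of `M` meets `N`". -/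
def Submodule.IsEssential {R M : Type*} [CommRing R] [AddCommGroup M] [Module R M]
    (N : Submodule R M) : Prop :=
  ∀ x : M, x ≠ 0 → ∃ r : R, r • x ≠ 0 ∧ r • x ∈ N

namespace Submodule.IsEssential

variable {R M : Type*} [CommRing R] [AddCommGroup M] [Module R M] {N : Submodule R M}

theorem isSMulRegular (hN : N.IsEssential) {s : R} (hs : ∀ x ∈ N, s • x = 0 → x = 0) :
    IsSMulRegular M s := by
  refine IsSMulRegular.of_right_eq_zero_of_smul fun x hsx => ?_
  by_contra hx
  obtain ⟨r, hr, hrN⟩ := hN x hx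
  exact hr (hs _ hrN (by rw [smul_comm, hsx, smul_zero]))

theorem exists_pow_smul_eq_zero [IsNoetherianRing R] (hN : N.IsEssential) {a : R}
    (ha : ∀ x ∈ N, a • x = 0) (x : M) : ∃ n : ℕ, a ^ n • x = 0 := by
  have hmono : Monotone fun n : ℕ => Ideal.torsionOf R M (a ^ n • x) := by
    intro m n hmn r (hr : r • a ^ m • x = 0)
    show r • a ^ n • x = 0
    rw [← Nat.sub_add_cancel hmn, pow_add, mul_smul, smul_comm, hr, smul_zero]
  obtain ⟨n, hn⟩ := monotone_stabilizes_iff_noetherian.2 inferInstance ⟨_, hmono⟩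
  refine ⟨n, by_contra fun hx => ?_⟩
  obtain ⟨r, hr, hrN⟩ := hN _ hx
  have : r ∈ Ideal.torsionOf R M (a ^ (n + 1) • x) := by
    show r • a ^ (n + 1) • x = 0
    rw [pow_succ', mul_smul, smul_comm, ha _ hrN]
  exact hr ((SetLike.ext_iff.1 (hn (n + 1) n.le_succ) r).2 this)

theorem exists_pow_le_torsionOf [IsNoetherianRing R] (hN : N.IsEssential) {q : Ideal R}
    (hq : ∀ a ∈ q, ∀ x ∈ N, a • x = 0) (x : M) : ∃ n : ℕ, q ^ n ≤ Ideal.torsionOf R M x :=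
  Ideal.exists_pow_le_of_le_radical_of_fg
    (fun a ha => hN.exists_pow_smul_eq_zero (hq a ha) x) (IsNoetherian.noetherian q)

end Submodule.IsEssential

section InjectiveHull

open CategoryTheory

variable {R : Type u} [CommRing R]

theorem Module.Injective.of_leftInverse {Q E : Type u} [AddCommGroup Q] [Module R Q]
    [AddCommGroup E] [Module R E] [Module.Injective R Q] (i : E →ₗ[R] Q) (p : Q →ₗ[R] E)
    (hpi : ∀ e, p (i e) = e) : Module.Injective R E where
  out _ _ _ _ _ _ f hf g :=
    let ⟨h, hh⟩ := Module.Injective.out f hf (i ∘ₗ g)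
    ⟨p ∘ₗ h, fun x => by simp [hh, hpi]⟩

theorem Module.exists_embedding_injective (X : Type u) [AddCommGroup X] [Module R X] :
    ∃ (Q : Type u) (_ : AddCommGroup Q) (_ : Module R Q) (ι : X →ₗ[R] Q),
      Module.Injective R Q ∧ Function.Injective ι :=
  ⟨Injective.under (C := ModuleCat R) (ModuleCat.of R X), inferInstance, inferInstance,
    (Injective.ι (ModuleCat.of R X)).hom,
    Module.injective_module_of_injective_object (inj := Injective.injective_under _) R _,
    (ModuleCat.mono_iff_injective _).1 inferInstance⟩

variable {Q : Type u} [AddCommGroup Q] [Module R Q]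

def Submodule.IsEssentialExtension (X E : Submodule R Q) : Prop :=
  X ≤ E ∧ ∀ x ∈ E, x ≠ 0 → ∃ r : R, r • x ≠ 0 ∧ r • x ∈ X

theorem Submodule.exists_maximal_disjoint (E : Submodule R Q) :
    ∃ C : Submodule R Q, Maximal (Disjoint · E) C :=
  zorn_le₀ _ fun c hc hchain =>
    ⟨sSup c, hchain.directedOn.disjoint_sSup_left.2 hc, fun _ => le_sSup⟩

theorem Submodule.exists_maximal_essential_extension (X : Submodule R Q) :
    ∃ E : Submodule R Q,
      Maximal (X.IsEssentialExtension) E := by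
  refine (zorn_le_nonempty₀
    {E | X.IsEssentialExtension E} (fun c hc hchain y hy => ?_) X
    ⟨le_rfl, fun x hx hx0 => ⟨1, by simpa using hx0, by simpa using hx⟩⟩).imp fun _ => And.right
  refine ⟨sSup c, ⟨(hc hy).1.trans (le_sSup hy), fun x hx hx0 => ?_⟩, fun _ => le_sSup⟩
  obtain ⟨E', hE', hxE'⟩ := (Submodule.mem_sSup_of_directed ⟨y, hy⟩ hchain.directedOn).1 hx
  exact (hc hE').2 x hxE' hx0

theorem Submodule.injective_of_maximal_essential_extension [Module.Injective R Q]
    {X E : Submodule R Q}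
    (hE : Maximal (X.IsEssentialExtension) E) :
    Module.Injective R E := by
  obtain ⟨C, hC⟩ := E.exists_maximal_disjoint
  have hCE_inj : Function.Injective (E.subtype.coprod C.subtype) := by
    rw [← LinearMap.ker_eq_bot, LinearMap.ker_coprod_of_disjoint_range _ _
      (by simpa [disjoint_comm] using hC.1)]
    simp
  -- `p` extends the projection `E ⊕ C → E` to `Q`
  obtain ⟨p, hp⟩ := Module.Injective.out _ hCE_inj (E.subtype ∘ₗ LinearMap.fst R E C)
  have hpE : ∀ e ∈ E, p e = e := fun e he => by simpa using hp (⟨e, he⟩, 0)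
  have hpC : ∀ c ∈ C, p c = 0 := fun c hc => by simpa using hp (0, ⟨c, hc⟩)
  have hrange : LinearMap.range p ≤ E := by
    refine hE.2 ⟨fun x hx => ⟨x, hpE x (hE.1.1 hx)⟩, ?_⟩
      fun x hx => ⟨x, hpE x hx⟩
    rintro _ ⟨x, rfl⟩ hpx
    have hxC : x ∉ C := fun hx => hpx (hpC x hx)
    have hCx : ¬ Disjoint (C ⊔ Submodule.span R {x}) E := fun hdisj =>
      hxC (hC.2 hdisj le_sup_left (Submodule.mem_sup_right (Submodule.mem_span_singleton_self x)))
    obtain ⟨e, he, heE, he0⟩ : ∃ e ∈ C ⊔ Submodule.span R {x}, e ∈ E ∧ e ≠ 0 := by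
      simpa [Submodule.disjoint_def] using hCx
    obtain ⟨c, hc, z, hz, rfl⟩ := Submodule.mem_sup.1 he
    obtain ⟨r, rfl⟩ := Submodule.mem_span_singleton.1 hz
    have hrx : r • p x = c + r • x := by rw [← hpE _ heE, map_add, hpC c hc, zero_add, map_smul]
    obtain ⟨r', hr', hr'X⟩ := hE.1.2 _ heE he0
    exact ⟨r' * r, by rwa [mul_smul, hrx], by rwa [mul_smul, hrx]⟩
  exact Module.Injective.of_leftInverse E.subtype (p.codRestrict E fun x => hrange ⟨x, rfl⟩)
    fun e => Subtype.ext (hpE e e.2)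

theorem Module.exists_injective_isEssential (X : Type u) [AddCommGroup X] [Module R X] :
    ∃ (W : Type u) (_ : AddCommGroup W) (_ : Module R W) (ε : X →ₗ[R] W),
      Module.Injective R W ∧ Function.Injective ε ∧ (LinearMap.range ε).IsEssential := by
  obtain ⟨Q, _, _, ι, hQ, hι⟩ := Module.exists_embedding_injective (R := R) X
  obtain ⟨E, hE⟩ := (LinearMap.range ι).exists_maximal_essential_extension
  refine ⟨E, inferInstance, inferInstance, ι.codRestrict E fun x => hE.1.1 ⟨x, rfl⟩,
    Submodule.injective_of_maximal_essential_extension hE,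
    fun x y hxy => hι (congrArg Subtype.val hxy), fun x hx => ?_⟩
  obtain ⟨r, hr, y, hy⟩ := hE.1.2 x x.2 (Subtype.coe_ne_coe.2 hx)
  exact ⟨r, fun h => hr (congrArg Subtype.val h), y, Subtype.ext hy⟩

end InjectiveHull

section FractionRing

variable {D : Type u} [CommRing D]

theorem Module.exists_injective_pi_fractionRing [IsDomain D] (V : Type u) [AddCommGroup V]
    [Module D V] [Module.IsTorsionFree D V] :
    ∃ (ι : Type u) (φ : V →ₗ[D] ι → FractionRing D), Function.Injective φ := by
  let K := FractionRing D
  let L := LocalizedModule (nonZeroDivisors D) V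
  let b := Module.Basis.ofVectorSpace K L
  have hmk : Function.Injective (LocalizedModule.mkLinearMap (nonZeroDivisors D) V) :=
    (IsLocalizedModule.injective_iff_isRegular _ _).2 fun c =>
      Module.IsTorsionFree.isSMulRegular (IsRegular.of_ne_zero (nonZeroDivisors.ne_zero c.2))
  refine ⟨_, ((Finsupp.lcoeFun ∘ₗ b.repr.toLinearMap).restrictScalars D) ∘ₗ
    LocalizedModule.mkLinearMap (nonZeroDivisors D) V, ?_⟩
  exact (DFunLike.coe_injective.comp b.repr.injective).comp hmk

variable {R : Type u} [CommRing R] [Algebra R D] {K : Type u} [CommRing K] [Algebra R K]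
  [Algebra D K] [IsScalarTower R D K] [IsFractionRing D K]

theorem Submodule.FG.exists_injective_of_isFractionRing {N : Submodule R K} (hN : N.FG) :
    ∃ φ : N →ₗ[R] D, Function.Injective φ := by
  obtain ⟨s, rfl⟩ := hN
  obtain ⟨b, hb⟩ := IsLocalization.exist_integer_multiples_of_finset (nonZeroDivisors D) s
  let ι := (Algebra.linearMap D K).restrictScalars R
  have hι : Function.Injective ι := IsFractionRing.injective D K
  let μ := LinearMap.mulLeft R (algebraMap D K b)
  have hμ : Function.Injective μ := (IsLocalization.map_units K b).mul_right_injective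
  have hspan : ∀ x ∈ Submodule.span R (s : Set K), μ x ∈ LinearMap.range ι := by
    refine fun x hx => (Submodule.span_le (p := (LinearMap.range ι).comap μ)).2 (fun a ha => ?_) hx
    obtain ⟨d, hd⟩ := hb a ha
    exact ⟨d, by simpa [ι, μ, Algebra.smul_def] using hd⟩
  refine ⟨(LinearEquiv.ofInjective ι hι).symm.toLinearMap ∘ₗ
    (μ ∘ₗ (Submodule.span R (s : Set K)).subtype).codRestrict _ fun x => hspan x x.2, ?_⟩
  refine (LinearEquiv.ofInjective ι hι).symm.injective.comp fun x y hxy => Subtype.ext (hμ ?_)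
  exact congrArg Subtype.val hxy

end FractionRing

section TorsionPair

variable {R : Type u} [CommRing R] {T F : ModuleClass R}
  (hF : ∀ (M : Type u) [AddCommGroup M] [Module R M],
    F M ↔ ∀ (N : Type u) [AddCommGroup N] [Module R N], T N → ∀ f : N →ₗ[R] M, f = 0)
include hF

theorem isClosedUnderDirectLimits_of_isClosedUnderSubmodules [IsNoetherianRing R]
    (hT : ∀ (M : Type u) [AddCommGroup M] [Module R M],
      T M ↔ ∀ (N : Type u) [AddCommGroup N] [Module R N], F N → ∀ f : M →ₗ[R] N, f = 0)
    (hT_sub : IsClosedUnderSubmodules T) : IsClosedUnderDirectLimits F := by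
  intro ι _ _ _ G _ _ f _ hG
  cases isEmpty_or_nonempty ι
  · exact torsionFree_of_subsingleton hF
  refine (hF _).2 fun S _ _ hS g => LinearMap.ext fun s => ?_
  show g s = 0
  set I := Ideal.torsionOf R S s
  have hTI : T (R ⧸ I) :=
    torsion_of_linearEquiv hT (Ideal.quotTorsionOfEquivSpanSingleton R S s).symm (hT_sub S _ hS)
  have hI : I ≤ Ideal.torsionOf R _ (g s) := fun r (hr : r • s = 0) => by
    rw [Ideal.mem_torsionOf_iff, ← map_smul, hr, map_zero]
  obtain ⟨k, z, hzs, hIz⟩ :=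
    Module.DirectLimit.exists_of_le_torsionOf (IsNoetherian.noetherian I) hI
  have hz : z = 0 := by
    rw [← LinearMap.toSpanSingleton_eq_zero_iff (R := R), ← I.liftQ_mkQ _ hIz,
      (hF _).1 (hG k) _ hTI (I.liftQ _ hIz), LinearMap.zero_comp]
  rw [← hzs, hz, map_zero]

variable (hlim : IsClosedUnderDirectLimits F)
include hlim

theorem torsionFree_of_directedOn {M : Type u} [AddCommGroup M] [Module R M]
    (S : Set (Submodule R M)) (hS : DirectedOn (· ≤ ·) S) (hcover : ∀ x : M, ∃ N ∈ S, x ∈ N)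
    (hSF : ∀ N ∈ S, F N) : F M := by
  have : IsDirected S (· ≤ ·) := ⟨fun N N' =>
    let ⟨P, hP, hNP, hN'P⟩ := hS N N.2 N' N'.2
    ⟨⟨P, hP⟩, hNP, hN'P⟩⟩
  have : Nonempty S := let ⟨N, hN, _⟩ := hcover 0; ⟨⟨N, hN⟩⟩
  let incl : ∀ N N' : S, N ≤ N' → (N : Submodule R M) →ₗ[R] (N' : Submodule R M) :=
    fun _ _ h => Submodule.inclusion h
  have : DirectedSystem (fun N : S => (N : Submodule R M)) fun N N' h => incl N N' h :=
    ⟨fun _ _ => rfl, fun _ _ _ _ _ _ => rfl⟩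
  let φ := Module.DirectLimit.lift R S _ incl (fun N => (N : Submodule R M).subtype)
    fun _ _ _ _ => rfl
  have hφ_of : ∀ N x, φ (Module.DirectLimit.of R S _ incl N x) = x := fun _ _ =>
    Module.DirectLimit.lift_of ..
  have hφ : Function.Bijective φ := by
    refine ⟨(injective_iff_map_eq_zero φ).2 fun w hw => ?_, fun x => ?_⟩
    · obtain ⟨N, x, rfl⟩ := Module.DirectLimit.exists_of w
      rw [hφ_of] at hw
      rw [(Submodule.coe_eq_zero.1 hw), map_zero]
    · obtain ⟨N, hN, hx⟩ := hcover x
      exact ⟨_, hφ_of ⟨N, hN⟩ ⟨x, hx⟩⟩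
  exact torsionFree_of_linearEquiv hF (LinearEquiv.ofBijective φ hφ)
    (hlim S _ incl fun N => hSF N N.2)

theorem torsionFree_fractionRing {D : Type u} [CommRing D] [Algebra R D] (hD : F D) :
    F (FractionRing D) :=
  torsionFree_of_directedOn hF hlim {N | N.FG}
    (fun _ hN _ hN' => ⟨_, hN.sup hN', le_sup_left, le_sup_right⟩)
    (fun x => ⟨_, Submodule.fg_span_singleton x, Submodule.mem_span_singleton_self x⟩)
    fun _ hN =>
      let ⟨_, hφ⟩ := Submodule.FG.exists_injective_of_isFractionRing (D := D) hN
      torsionFree_of_injective hF hφ hD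

theorem torsionFree_of_isTorsionBySet_of_isSMulRegular {q : Ideal R} [q.IsPrime]
    (hq : F (R ⧸ q)) {V : Type u} [AddCommGroup V] [Module R V]
    (hqV : Module.IsTorsionBySet R V q) (hreg : ∀ s ∉ q, IsSMulRegular V s) : F V := by
  let _ := hqV.module
  have : Module.IsTorsionFree (R ⧸ q) V := ⟨fun c hc v w hvw => by
    obtain ⟨s, rfl⟩ := Ideal.Quotient.mk_surjective c
    exact hreg s (fun hs => hc.ne_zero (Ideal.Quotient.eq_zero_iff_mem.2 hs)) hvw⟩
  obtain ⟨ι, φ, hφ⟩ := Module.exists_injective_pi_fractionRing (D := R ⧸ q) V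
  exact torsionFree_of_injective hF (e := φ.restrictScalars R) hφ
    (torsionFree_pi hF _ fun _ => torsionFree_fractionRing hF hlim hq)

theorem torsionFree_torsionBySet_pow {q : Ideal R} [q.IsPrime] (hq : F (R ⧸ q)) {W : Type u}
    [AddCommGroup W] [Module R W] (hreg : ∀ s ∉ q, IsSMulRegular W s) (n : ℕ) :
    F (Submodule.torsionBySet R W (q ^ n : Ideal R)) := by
  induction n with
  | zero =>
    have h0 : ∀ w ∈ Submodule.torsionBySet R W (q ^ 0 : Ideal R), w = 0 := fun w hw =>
      (Ideal.torsionOf_eq_top_iff (R := R) w).1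
        (top_le_iff.1 (by simpa using Submodule.mem_torsionBySet_ideal_iff.1 hw))
    have : Subsingleton (Submodule.torsionBySet R W (q ^ 0 : Ideal R)) :=
      ⟨fun x y => Subtype.ext ((h0 x x.2).trans (h0 y y.2).symm)⟩
    exact torsionFree_of_subsingleton hF
  | succ n ih =>
    let E := Submodule.torsionBySet R W (q ^ (n + 1) : Ideal R)
    let K := (Submodule.torsionBySet R W (q ^ n : Ideal R)).comap E.subtype
    have hle := Submodule.torsionBySet_le_torsionBySet_of_subset (R := R) (M := W)
      (SetLike.coe_subset_coe.2 (Ideal.pow_le_pow_right n.le_succ : q ^ (n + 1) ≤ q ^ n))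
    refine torsionFree_of_submodule_of_quotient hF K
      (torsionFree_of_linearEquiv hF (Submodule.comapSubtypeEquivOfLe hle).symm ih)
      (torsionFree_of_isTorsionBySet_of_isSMulRegular hF hlim hq (fun v a => ?_) fun s hs => ?_)
    · induction v using Submodule.Quotient.induction_on with | _ x => ?_
      rw [← Submodule.Quotient.mk_smul, Submodule.Quotient.mk_eq_zero]
      refine Submodule.mem_torsionBySet_ideal_iff.2 fun b hb => ?_
      show b • (a : R) • (x : W) = 0
      rw [smul_smul]
      exact Submodule.mem_torsionBySet_ideal_iff.1 x.2 (pow_succ q n ▸ Ideal.mul_mem_mul hb a.2)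
    · refine IsSMulRegular.of_right_eq_zero_of_smul fun v hv => ?_
      induction v using Submodule.Quotient.induction_on with | _ x => ?_
      rw [← Submodule.Quotient.mk_smul, Submodule.Quotient.mk_eq_zero] at hv
      rw [Submodule.Quotient.mk_eq_zero]
      refine Submodule.mem_torsionBySet_ideal_iff.2 fun b hb => hreg s hs ?_
      show s • b • (x : W) = s • 0
      rw [smul_zero, smul_comm]
      exact Submodule.mem_torsionBySet_ideal_iff.1 hv hb

theorem torsionFree_of_isSMulRegular_of_exists_pow_le {q : Ideal R} [q.IsPrime]
    (hq : F (R ⧸ q)) {W : Type u} [AddCommGroup W] [Module R W]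
    (hreg : ∀ s ∉ q, IsSMulRegular W s) (hpow : ∀ w : W, ∃ n, q ^ n ≤ Ideal.torsionOf R W w) :
    F W := by
  let E : ℕ → Submodule R W := fun n => Submodule.torsionBySet R W (q ^ n : Ideal R)
  have hmono : Monotone E := fun _ _ hmn =>
    Submodule.torsionBySet_le_torsionBySet_of_subset
      (SetLike.coe_subset_coe.2 (Ideal.pow_le_pow_right hmn))
  refine torsionFree_of_directedOn hF hlim (Set.range E) hmono.directed_le.directedOn_range
    (fun w => ?_) (by rintro _ ⟨n, rfl⟩; exact torsionFree_torsionBySet_pow hF hlim hq hreg n)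
  obtain ⟨n, hn⟩ := hpow w
  exact ⟨E n, ⟨n, rfl⟩, Submodule.mem_torsionBySet_ideal_iff.2 hn⟩

theorem exists_injective_torsionFree_of_quotient [IsNoetherianRing R] {q : Ideal R}
    [q.IsPrime] (hq : F (R ⧸ q)) :
    ∃ (W : Type u) (_ : AddCommGroup W) (_ : Module R W) (ε : R ⧸ q →ₗ[R] W),
      Module.Injective R W ∧ Function.Injective ε ∧ F W := by
  obtain ⟨W, _, _, ε, hW, hε, hess⟩ := Module.exists_injective_isEssential (R := R) (R ⧸ q)
  have hq_kill : ∀ a ∈ q, ∀ w ∈ LinearMap.range ε, a • w = 0 := by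
    rintro a ha _ ⟨y, rfl⟩
    rw [← map_smul, Algebra.smul_def, Ideal.Quotient.algebraMap_eq,
      Ideal.Quotient.eq_zero_iff_mem.2 ha, zero_mul, map_zero]
  have hq_reg : ∀ s ∉ q, ∀ w ∈ LinearMap.range ε, s • w = 0 → w = 0 := by
    rintro s hs _ ⟨y, rfl⟩ hsy
    rw [← map_smul, ← map_zero ε, Algebra.smul_def, Ideal.Quotient.algebraMap_eq] at hsy
    rw [(mul_eq_zero.1 (hε hsy)).resolve_left fun h => hs (Ideal.Quotient.eq_zero_iff_mem.1 h),
      map_zero]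
  exact ⟨W, _, _, ε, hW, hε, torsionFree_of_isSMulRegular_of_exists_pow_le hF hlim hq
    (fun s hs => hess.isSMulRegular (hq_reg s hs)) (hess.exists_pow_le_torsionOf hq_kill)⟩

theorem not_torsionOf_le_of_torsion [IsNoetherianRing R] {q : Ideal R} [q.IsPrime]
    (hq : F (R ⧸ q)) {M : Type u} [AddCommGroup M] [Module R M] (hM : T M) (x : M) :
    ¬ Ideal.torsionOf R M x ≤ q := by
  intro hle
  obtain ⟨W, _, _, ε, hW, hε, hFW⟩ := exists_injective_torsionFree_of_quotient hF hlim hq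
  let i := (R ∙ x).subtype ∘ₗ (Ideal.quotTorsionOfEquivSpanSingleton R M x).toLinearMap
  have hi : Function.Injective i := Subtype.val_injective.comp (LinearEquiv.injective _)
  obtain ⟨g, hg⟩ := Module.Injective.out i hi (ε ∘ₗ Submodule.mapQ _ q LinearMap.id hle)
  have h1 := hg (Submodule.Quotient.mk 1)
  rw [(hF W).1 hFW M hM g, LinearMap.zero_apply, LinearMap.comp_apply, Submodule.mapQ_apply,
    LinearMap.id_apply, eq_comm, ← map_zero ε] at h1
  exact q.one_notMem ((Submodule.Quotient.mk_eq_zero q).1 (hε h1))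

theorem isClosedUnderSubmodules_of_isClosedUnderDirectLimits [IsNoetherianRing R]
    (hT : ∀ (M : Type u) [AddCommGroup M] [Module R M],
      T M ↔ ∀ (N : Type u) [AddCommGroup N] [Module R N], F N → ∀ f : M →ₗ[R] N, f = 0) :
    IsClosedUnderSubmodules T := by
  intro M _ _ N hM
  refine (hT N).2 fun Y _ _ hY f => LinearMap.ext fun n => by_contra fun hfn => ?_
  obtain ⟨q, hq, hle⟩ := exists_le_isAssociatedPrime_of_isNoetherianRing (R := R) (f n) hfn
  obtain ⟨hq_prime, y, rfl⟩ := Submodule.isAssociatedPrime_iff.1 hq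
  have hcolon : (⊥ : Submodule R Y).colon {y} = Ideal.torsionOf R Y y := by
    ext r
    rw [Submodule.mem_colon_singleton, Submodule.mem_bot, Ideal.mem_torsionOf_iff]
  have hFq : F (R ⧸ (⊥ : Submodule R Y).colon {y}) := by
    rw [hcolon]
    exact torsionFree_of_injective hF (e := (R ∙ y).subtype ∘ₗ
      (Ideal.quotTorsionOfEquivSpanSingleton R Y y).toLinearMap)
      (Subtype.val_injective.comp (LinearEquiv.injective _)) hY
  refine not_torsionOf_le_of_torsion hF hlim hFq hM (n : M) fun r hr => hle ?_
  rw [Submodule.mem_colon_singleton, Submodule.mem_bot, ← map_smul]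
  rw [show r • n = 0 from Subtype.ext hr, map_zero]

end TorsionPair

/-- Over a commutative noetherian ring, a torsion pair is of finite type (the
torsion-free class is closed under direct limits of directed systems) iff it is
hereditary (the torsion class is closed under submodules). -/
theorem stmt_13 {R : Type u} [CommRing R] [IsNoetherianRing R]
    (T F : ∀ (M : Type u) [AddCommGroup M] [Module R M], Prop)
    -- torsion pair:
    (hF : ∀ (M : Type u) [AddCommGroup M] [Module R M],
      F M ↔ ∀ (N : Type u) [AddCommGroup N] [Module R N], T N → ∀ f : N →ₗ[R] M, f = 0)
    (hT : ∀ (M : Type u) [AddCommGroup M] [Module R M],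
      T M ↔ ∀ (N : Type u) [AddCommGroup N] [Module R N], F N → ∀ f : M →ₗ[R] N, f = 0) :
    (∀ (ι : Type u) [Preorder ι] [IsDirected ι (· ≤ ·)] [DecidableEq ι]
      (G : ι → Type u) [∀ i, AddCommGroup (G i)] [∀ i, Module R (G i)]
      (f : ∀ i j, i ≤ j → G i →ₗ[R] G j) [DirectedSystem G fun i j h => f i j h],
      (∀ i, F (G i)) → F (Module.DirectLimit G f)) ↔
    (∀ (M : Type u) [AddCommGroup M] [Module R M] (N : Submodule R M), T M → T N) :=
  ⟨fun hlim => isClosedUnderSubmodules_of_isClosedUnderDirectLimits hF hlim hT,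
    isClosedUnderDirectLimits_of_isClosedUnderSubmodules hF hT⟩
end

section
/- Let R be a commutative ring and σ : P₋₁ → P₀ an R-linear map between projective R-modules which is of finite type, i.e. there is a family (σᵢ)_{i∈I} of R-linear maps between finitely generated projective R-modules with D_σ = ⋂_{i∈I} D_{σᵢ}. Then there exists a Gabriel filter of finite type G on R such that D_σ = Div G, i.e. for every R-module M: every R-linear map P₋₁ → M factors through σ if and only if I·M = M for every I ∈ G. -/
universe u

/-- `T` is a silting module: it has a projective presentation `P₋₁ →σ P₀ → T → 0`
with `Gen T = D_σ`. -/
def IsSilting (R : Type u) [Ring R] (T : Type u) [AddCommGroup T] [Module R T] : Prop :=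
  ∃ (P₁ P₀ : Type u) (_ : AddCommGroup P₁) (_ : Module R P₁)
    (_ : AddCommGroup P₀) (_ : Module R P₀),
      Module.Projective R P₁ ∧ Module.Projective R P₀ ∧
      ∃ (σ : P₁ →ₗ[R] P₀) (π : P₀ →ₗ[R] T),
        Function.Surjective π ∧ LinearMap.ker π = LinearMap.range σ ∧
        ∀ (M : Type u) [AddCommGroup M] [Module R M], MemGen R T M ↔ MemD σ M

/-- A bundled `R`-linear map between finitely generated projective `R`-modules. -/
structure FGProjMap (R : Type u) [Ring R] : Type (u + 1) where
  A : Type u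
  B : Type u
  [addA : AddCommGroup A]
  [modA : Module R A]
  [addB : AddCommGroup B]
  [modB : Module R B]
  finA : Module.Finite R A
  projA : Module.Projective R A
  finB : Module.Finite R B
  projB : Module.Projective R B
  f : A →ₗ[R] B

attribute [instance] FGProjMap.addA FGProjMap.modA FGProjMap.addB FGProjMap.modB

/-- `G` is a Gabriel filter of ideals of a commutative ring `R`. Here
`(I : x) = {r | x * r ∈ I}` is realized as the comap of `I` along `r ↦ x • r`. -/
def IsGabrielFilter {R : Type u} [CommRing R] (G : Set (Ideal R)) : Prop :=
  ⊤ ∈ G ∧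
  (∀ I J : Ideal R, I ∈ G → I ≤ J → J ∈ G) ∧
  (∀ I ∈ G, ∀ x : R, Submodule.comap (LinearMap.lsmul R R x) I ∈ G) ∧
  (∀ J : Ideal R, (∃ I ∈ G, ∀ x ∈ I, Submodule.comap (LinearMap.lsmul R R x) J ∈ G) →
    J ∈ G)

/-- `G` is of finite type: every ideal of `G` contains a finitely generated ideal
belonging to `G`. -/
def GabrielFiniteType {R : Type u} [CommRing R] (G : Set (Ideal R)) : Prop :=
  ∀ I ∈ G, ∃ J ∈ G, J ≤ I ∧ J.FG

/-- `M ∈ Div G`: `M` is `G`-divisible, i.e. `I • M = M` for every `I ∈ G`. -/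
def MemDiv {R : Type u} [CommRing R] (G : Set (Ideal R))
    (M : Type u) [AddCommGroup M] [Module R M] : Prop :=
  ∀ I ∈ G, I • (⊤ : Submodule R M) = ⊤

/-!
Split a map `p` between finitely generated projective modules off a map of free modules
`R^a → R^(a ⊕ b)` with matrix `D`. Then `M ∈ D_p` iff `D` acts surjectively `M^(a ⊕ b) → M^a`,
and this happens iff the ideal `I` of maximal minors of `D` satisfies `I M = M`: one direction
is Cramer's rule; for the other, `I` kills `M / I M`, Laplace expansion shows that the maximal
minors of `D` without its first row kill it too, and induction on the number of rows gives
`M / I M = 0`. So `D_σ` is the class of modules divisible by a family `J` of finitely generated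
ideals, and the ideals `I` with `Div J ⊆ Div I` form the required Gabriel filter: the filter
axioms come from closure of `Div J` under quotients, finite type from closure under products.
-/

namespace Submodule

variable {R M : Type*} [CommRing R] [AddCommGroup M] [Module R M] {I : Ideal R}

lemma smul_top_eq_top_of_le {I' : Ideal R} (hle : I ≤ I') (h : I • (⊤ : Submodule R M) = ⊤) :
    I' • (⊤ : Submodule R M) = ⊤ :=
  top_le_iff.1 (h.symm.trans_le (smul_mono_left hle))

lemma smul_top_eq_top_of_surjective {N : Type*} [AddCommGroup N] [Module R N]
    {f : M →ₗ[R] N} (hf : Function.Surjective f) (h : I • (⊤ : Submodule R M) = ⊤) :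
    I • (⊤ : Submodule R N) = ⊤ := by
  rw [← LinearMap.range_eq_top.2 hf, LinearMap.range_eq_map, ← map_smul'', h]

lemma smul_top_eq_top_pi {ι : Type*} [Finite ι] (h : I • (⊤ : Submodule R M) = ⊤) :
    I • (⊤ : Submodule R (ι → M)) = ⊤ := by
  classical
  have := Fintype.ofFinite ι
  refine eq_top_iff'.2 fun v => ?_
  rw [← Finset.univ_sum_single v]
  refine sum_mem fun i _ => ?_
  have hi : v i ∈ I • (⊤ : Submodule R M) := by rw [h]; trivial
  have := mem_map_of_mem (f := LinearMap.single R (fun _ => M) i) hi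
  rw [map_smul''] at this
  exact smul_mono le_rfl le_top this

lemma exists_fg_le_mem_smul {N : Submodule R M} {m : M} (hm : m ∈ I • N) :
    ∃ F : Ideal R, F.FG ∧ F ≤ I ∧ m ∈ F • N := by
  refine smul_induction_on hm (fun r hr n hn => ?_) fun m₁ m₂ h₁ h₂ => ?_
  · exact ⟨Ideal.span {r}, fg_span_singleton r, (Ideal.span_singleton_le_iff_mem I).2 hr,
      smul_mem_smul (Ideal.mem_span_singleton_self r) hn⟩
  · obtain ⟨F₁, hF₁, hF₁I, hm₁⟩ := h₁
    obtain ⟨F₂, hF₂, hF₂I, hm₂⟩ := h₂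
    exact ⟨F₁ ⊔ F₂, FG.sup hF₁ hF₂, sup_le hF₁I hF₂I,
      add_mem (smul_mono_left le_sup_left hm₁) (smul_mono_left le_sup_right hm₂)⟩

lemma le_annihilator_quotient_smul_top (I : Ideal R) :
    I ≤ Module.annihilator R (M ⧸ I • (⊤ : Submodule R M)) := by
  rw [annihilator_quotient]
  exact fun r hr => mem_colon.2 fun m _ => smul_mem_smul hr trivial

end Submodule

namespace Module

variable {R M : Type*} [CommRing R] [AddCommGroup M] [Module R M] {I : Ideal R}

lemma subsingleton_of_le_annihilator (hI : I ≤ annihilator R M)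
    (h : I • (⊤ : Submodule R M) = ⊤) : Subsingleton M := by
  rw [← Submodule.annihilator_top, Submodule.le_annihilator_iff, h] at hI
  exact (Submodule.subsingleton_iff R).1 (subsingleton_of_bot_eq_top hI.symm)

lemma mem_annihilator_of_colon_smul_top_eq_top (hI : I ≤ annihilator R M) {x : R}
    (h : Submodule.comap (LinearMap.lsmul R R x) I • (⊤ : Submodule R M) = ⊤) :
    x ∈ annihilator R M := by
  refine mem_annihilator.2 fun m => ?_
  have hm : m ∈ Submodule.comap (LinearMap.lsmul R R x) I • (⊤ : Submodule R M) := by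
    rw [h]; trivial
  refine Submodule.smul_induction_on hm (fun r hr n _ => ?_) fun m₁ m₂ h₁ h₂ => ?_
  · rw [smul_smul]
    exact mem_annihilator.1 (hI hr) n
  · rw [smul_add, h₁, h₂, add_zero]

end Module

namespace Matrix

variable {R : Type*} [CommRing R] {ι κ ν : Type*}

lemma det_submatrix_cons {n : ℕ} (D : Matrix (Fin (n + 1)) κ R) (k : κ) (c : Fin n → κ) :
    (D.submatrix id (Fin.cons k c : Fin (n + 1) → κ)).det =
      ∑ i : Fin (n + 1), (-1) ^ (i : ℕ) * D i k * (D.submatrix i.succAbove c).det := by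
  rw [det_succ_column_zero]
  refine Finset.sum_congr rfl fun i _ => ?_
  simp [submatrix_submatrix, Function.comp_def]

variable [Fintype κ]

def mulVecOn (D : Matrix ι κ R) (M : Type*) [AddCommGroup M] [Module R M] :
    (κ → M) →ₗ[R] (ι → M) where
  toFun v i := ∑ k, D i k • v k
  map_add' v w := by funext i; simp [smul_add, Finset.sum_add_distrib]
  map_smul' r v := by funext i; simp [Finset.smul_sum, smul_comm r]

def maxMinorsIdeal [Fintype ι] [DecidableEq ι] (D : Matrix ι κ R) : Ideal R :=
  Ideal.span (Set.range fun c : ι → κ => (D.submatrix id c).det)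

lemma maxMinorsIdeal_fg [Fintype ι] [DecidableEq ι] (D : Matrix ι κ R) :
    D.maxMinorsIdeal.FG :=
  Submodule.fg_span (Set.finite_range _)

variable (M N : Type*) [AddCommGroup M] [Module R M] [AddCommGroup N] [Module R N]

@[simp] lemma mulVecOn_apply (D : Matrix ι κ R) (v : κ → M) (i : ι) :
    D.mulVecOn M v i = ∑ k, D i k • v k := rfl

lemma mulVecOn_mul [Fintype ν] (A : Matrix ι ν R) (B : Matrix ν κ R) :
    (A * B).mulVecOn M = A.mulVecOn M ∘ₗ B.mulVecOn M := by
  ext v i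
  simp only [mulVecOn_apply, mul_apply, LinearMap.comp_apply, Finset.smul_sum, Finset.sum_smul,
    mul_smul]
  exact Finset.sum_comm

lemma mulVecOn_compLeft (D : Matrix ι κ R) (f : M →ₗ[R] N) (v : κ → M) :
    D.mulVecOn N (f ∘ v) = f ∘ D.mulVecOn M v := by
  ext i; simp [map_sum]

lemma det_smul_mem_range_mulVecOn [Fintype ι] [DecidableEq ι] (E : Matrix ι ι R) (v : ι → M) :
    E.det • v ∈ LinearMap.range (E.mulVecOn M) := by
  refine ⟨E.adjugate.mulVecOn M v, ?_⟩
  rw [← LinearMap.comp_apply, ← mulVecOn_mul, mul_adjugate]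
  ext i
  simp [Matrix.one_apply, ite_smul]

lemma range_mulVecOn_submatrix_le [DecidableEq κ] [Fintype ν] (D : Matrix ι κ R) (c : ν → κ) :
    LinearMap.range ((D.submatrix id c).mulVecOn M) ≤ LinearMap.range (D.mulVecOn M) := by
  have : D.submatrix id c = D * (1 : Matrix κ κ R).submatrix (Equiv.refl κ) c :=
    (mul_submatrix_one (Equiv.refl κ) c D).symm
  rw [this, mulVecOn_mul, LinearMap.range_comp]
  exact LinearMap.map_le_range

variable {M N}

lemma smul_mem_range_mulVecOn [Fintype ι] [DecidableEq ι] [DecidableEq κ] (D : Matrix ι κ R)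
    {x : R} (hx : x ∈ D.maxMinorsIdeal) (v : ι → M) :
    x • v ∈ LinearMap.range (D.mulVecOn M) := by
  suffices D.maxMinorsIdeal ≤
      (LinearMap.range (D.mulVecOn M)).comap (LinearMap.toSpanSingleton R _ v) from this hx
  rw [maxMinorsIdeal, Ideal.span_le]
  rintro _ ⟨c, rfl⟩
  exact range_mulVecOn_submatrix_le M D c (det_smul_mem_range_mulVecOn M _ v)

lemma surjective_mulVecOn_of_smul_top_eq_top [Fintype ι] [DecidableEq ι] [DecidableEq κ]
    (D : Matrix ι κ R) (h : D.maxMinorsIdeal • (⊤ : Submodule R M) = ⊤) :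
    Function.Surjective (D.mulVecOn M) := by
  rw [← LinearMap.range_eq_top, eq_top_iff, ← Submodule.smul_top_eq_top_pi h]
  exact Submodule.smul_le.2 fun x hx v _ => smul_mem_range_mulVecOn D hx v

lemma surjective_mulVecOn_of_surjective (D : Matrix ι κ R) {f : M →ₗ[R] N}
    (hf : Function.Surjective f) (hs : Function.Surjective (D.mulVecOn M)) :
    Function.Surjective (D.mulVecOn N) := by
  intro w
  choose w' hw' using fun i => hf (w i)
  obtain ⟨v, hv⟩ := hs w'
  exact ⟨f ∘ v, by rw [mulVecOn_compLeft, hv]; exact funext hw'⟩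

lemma surjective_mulVecOn_submatrix (D : Matrix ι κ R) {r : ν → ι} (hr : Function.Injective r)
    (hs : Function.Surjective (D.mulVecOn M)) :
    Function.Surjective ((D.submatrix r id).mulVecOn M) := by
  intro w
  obtain ⟨g, rfl⟩ := hr.surjective_comp_right w
  obtain ⟨v, rfl⟩ := hs g
  exact ⟨v, rfl⟩

lemma surjective_mulVecOn_pi (D : Matrix ι κ R) {T : Type*} {N : T → Type*}
    [∀ t, AddCommGroup (N t)] [∀ t, Module R (N t)]
    (hs : ∀ t, Function.Surjective (D.mulVecOn (N t))) :
    Function.Surjective (D.mulVecOn (∀ t, N t)) := by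
  intro w
  choose v hv using fun t => hs t (fun i => w i t)
  refine ⟨fun k t => v t k, funext fun i => funext fun t => ?_⟩
  simpa [Finset.sum_apply] using congr_fun (hv t) i

lemma maxMinorsIdeal_submatrix_succ_le_annihilator {n : ℕ} (D : Matrix (Fin (n + 1)) κ R)
    (hD : D.maxMinorsIdeal ≤ Module.annihilator R M) (hs : Function.Surjective (D.mulVecOn M)) :
    (D.submatrix Fin.succ id).maxMinorsIdeal ≤ Module.annihilator R M := by
  rw [maxMinorsIdeal, Ideal.span_le]
  rintro _ ⟨c, rfl⟩
  refine Module.mem_annihilator.2 fun q => ?_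
  obtain ⟨u, hu⟩ := hs (Pi.single 0 q)
  have hminor (k : κ) : (D.submatrix id (Fin.cons k c : Fin (n + 1) → κ)).det • u k = 0 :=
    Module.mem_annihilator.1 (hD (Ideal.subset_span ⟨_, rfl⟩)) (u k)
  -- Laplace expansion along the first column, which is column `k` of `D`
  calc ((D.submatrix Fin.succ id).submatrix id c).det • q
      = ∑ i : Fin (n + 1), ((-1) ^ (i : ℕ) * (D.submatrix i.succAbove c).det) •
          D.mulVecOn M u i := by
        rw [hu, Fin.sum_univ_succ]
        simp [submatrix_submatrix]
    _ = ∑ k, (D.submatrix id (Fin.cons k c : Fin (n + 1) → κ)).det • u k := by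
        simp only [mulVecOn_apply, det_submatrix_cons, Finset.smul_sum, Finset.sum_smul,
          smul_smul]
        rw [Finset.sum_comm]
        refine Finset.sum_congr rfl fun k _ => Finset.sum_congr rfl fun i _ => ?_
        ring_nf
    _ = 0 := Finset.sum_eq_zero fun k _ => hminor k

theorem maxMinorsIdeal_smul_top_eq_top_of_surjective {n : ℕ} (D : Matrix (Fin n) κ R)
    (hs : Function.Surjective (D.mulVecOn M)) :
    D.maxMinorsIdeal • (⊤ : Submodule R M) = ⊤ := by
  induction n generalizing M with
  | zero =>
    have h1 : (D.submatrix id Fin.elim0).det ∈ D.maxMinorsIdeal := Ideal.subset_span ⟨_, rfl⟩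
    rw [det_fin_zero] at h1
    rw [(Ideal.eq_top_iff_one _).2 h1, Submodule.top_smul]
  | succ n ih =>
    set Q := M ⧸ D.maxMinorsIdeal • (⊤ : Submodule R M)
    have hQ : Function.Surjective (D.mulVecOn Q) :=
      surjective_mulVecOn_of_surjective D (Submodule.mkQ_surjective _) hs
    have hann := Submodule.le_annihilator_quotient_smul_top (M := M) D.maxMinorsIdeal
    have hQ_triv : Subsingleton Q :=
      Module.subsingleton_of_le_annihilator
        (maxMinorsIdeal_submatrix_succ_le_annihilator D hann hQ)
        (ih _ (surjective_mulVecOn_submatrix D (Fin.succ_injective n) hQ))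
    exact Submodule.Quotient.subsingleton_iff.1 hQ_triv

theorem maxMinorsIdeal_smul_top_eq_top_iff {n : ℕ} [DecidableEq κ] (D : Matrix (Fin n) κ R) :
    D.maxMinorsIdeal • (⊤ : Submodule R M) = ⊤ ↔ Function.Surjective (D.mulVecOn M) :=
  ⟨surjective_mulVecOn_of_smul_top_eq_top D, maxMinorsIdeal_smul_top_eq_top_of_surjective D⟩

lemma maxMinorsIdeal_replicateRow {n : ℕ} (g : Fin n → R) :
    (replicateRow (Fin 1) g).maxMinorsIdeal = Ideal.span (Set.range g) := by
  rw [maxMinorsIdeal]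
  congr 1
  ext x
  constructor
  · rintro ⟨c, rfl⟩
    exact ⟨c 0, by simp [det_unique]⟩
  · rintro ⟨k, rfl⟩
    exact ⟨fun _ => k, by simp [det_unique]⟩

end Matrix

lemma Submodule.smul_top_eq_top_pi_of_fg {R : Type*} [CommRing R] {I : Ideal R} (hI : I.FG)
    {T : Type*} {N : T → Type*} [∀ t, AddCommGroup (N t)] [∀ t, Module R (N t)]
    (h : ∀ t, I • (⊤ : Submodule R (N t)) = ⊤) :
    I • (⊤ : Submodule R (∀ t, N t)) = ⊤ := by
  classical
  obtain ⟨n, g, rfl⟩ := fg_iff_exists_fin_generating_family.1 hI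
  simp only [← Matrix.maxMinorsIdeal_replicateRow, Matrix.maxMinorsIdeal_smul_top_eq_top_iff]
    at h ⊢
  exact Matrix.surjective_mulVecOn_pi _ h

open Matrix in
lemma Module.piEquiv_mulVecOn_toMatrix'_transpose {R : Type*} [CommRing R] {α κ : Type*}
    [Fintype α] [Fintype κ] [DecidableEq α] (φ : (α → R) →ₗ[R] (κ → R)) (M : Type*)
    [AddCommGroup M] [Module R M] (v : κ → M) :
    piEquiv α R M ((LinearMap.toMatrix' φ)ᵀ.mulVecOn M v) = piEquiv κ R M v ∘ₗ φ := by
  refine (Pi.basisFun R α).ext fun i => ?_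
  simp [piEquiv_apply_apply, LinearMap.toMatrix'_apply]

section MemD

open Matrix

variable {R : Type u} [CommRing R] {M : Type u} [AddCommGroup M] [Module R M]

theorem memD_iff_surjective_mulVecOn {α κ : Type} [Fintype α] [Fintype κ] [DecidableEq α]
    (φ : (α → R) →ₗ[R] (κ → R)) :
    MemD φ M ↔ Function.Surjective ((LinearMap.toMatrix' φ)ᵀ.mulVecOn M) := by
  constructor
  · intro h w
    obtain ⟨g, hg⟩ := h (Module.piEquiv α R M w)
    obtain ⟨v, rfl⟩ := (Module.piEquiv κ R M).surjective g
    exact ⟨v, (Module.piEquiv α R M).injective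
      (by rw [Module.piEquiv_mulVecOn_toMatrix'_transpose, hg])⟩
  · intro h f
    obtain ⟨w, rfl⟩ := (Module.piEquiv α R M).surjective f
    obtain ⟨v, rfl⟩ := h w
    exact ⟨Module.piEquiv κ R M v, (Module.piEquiv_mulVecOn_toMatrix'_transpose φ M v).symm⟩

variable {A B B' F G : Type u} [AddCommGroup A] [Module R A] [AddCommGroup B] [Module R B]
  [AddCommGroup B'] [Module R B'] [AddCommGroup F] [Module R F] [AddCommGroup G] [Module R G]

theorem memD_linearEquiv_comp_iff (φ : A →ₗ[R] B) (e : B ≃ₗ[R] B') :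
    MemD (e.toLinearMap ∘ₗ φ) M ↔ MemD φ M := by
  constructor
  · intro h f
    obtain ⟨g, rfl⟩ := h f
    exact ⟨g ∘ₗ e.toLinearMap, rfl⟩
  · intro h f
    obtain ⟨g, rfl⟩ := h f
    exact ⟨g ∘ₗ e.symm.toLinearMap, by ext; simp⟩

-- Writing `F = A ⊕ A'` and `G = B ⊕ B'`, the map below is `p ⊕ id_{A'} ⊕ (0 → B')`.
theorem memD_iff_memD_of_retract (p : A →ₗ[R] B) {s : F →ₗ[R] A} {i : A →ₗ[R] F}
    (hsi : s ∘ₗ i = LinearMap.id) {t : G →ₗ[R] B} {j : B →ₗ[R] G}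
    (htj : t ∘ₗ j = LinearMap.id) :
    MemD p M ↔ MemD ((LinearMap.id - i ∘ₗ s).prod (j ∘ₗ p ∘ₗ s)) M := by
  constructor
  · intro h g
    obtain ⟨k, hk⟩ := h (g ∘ₗ i)
    refine ⟨g.coprod (k ∘ₗ t), LinearMap.ext fun x => ?_⟩
    have hk' : k (p (s x)) = g (i (s x)) := LinearMap.congr_fun hk (s x)
    have htj' : t (j (p (s x))) = p (s x) := LinearMap.congr_fun htj _
    simp [htj', hk']
  · intro h f
    obtain ⟨g, hg⟩ := h (f ∘ₗ s)
    refine ⟨g ∘ₗ LinearMap.inr R F G ∘ₗ j, LinearMap.ext fun a => ?_⟩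
    have hsi' : s (i a) = a := LinearMap.congr_fun hsi a
    simpa [hsi'] using LinearMap.congr_fun hg (i a)

theorem FGProjMap.exists_fg_ideal_memD_iff (p : FGProjMap R) :
    ∃ J : Ideal R, J.FG ∧ ∀ (M : Type u) [AddCommGroup M] [Module R M],
      MemD p.f M ↔ J • (⊤ : Submodule R M) = ⊤ := by
  have := p.finA; have := p.projA; have := p.finB; have := p.projB
  obtain ⟨a, sA, hsA⟩ := Module.Finite.exists_fin' R p.A
  obtain ⟨b, sB, hsB⟩ := Module.Finite.exists_fin' R p.B
  obtain ⟨iA, hiA⟩ := Module.projective_lifting_property sA LinearMap.id hsA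
  obtain ⟨iB, hiB⟩ := Module.projective_lifting_property sB LinearMap.id hsB
  let e := (LinearEquiv.sumArrowLequivProdArrow (Fin a) (Fin b) R R).symm
  let φ := e.toLinearMap ∘ₗ (LinearMap.id - iA ∘ₗ sA).prod (iB ∘ₗ p.f ∘ₗ sA)
  refine ⟨(LinearMap.toMatrix' φ)ᵀ.maxMinorsIdeal, maxMinorsIdeal_fg _, fun M _ _ => ?_⟩
  rw [memD_iff_memD_of_retract p.f hiA hiB, ← memD_linearEquiv_comp_iff _ e,
    memD_iff_surjective_mulVecOn, maxMinorsIdeal_smul_top_eq_top_iff]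

end MemD

section DivFilter

variable {R : Type u} [CommRing R] {ι : Type*}

def divFilter (J : ι → Ideal R) : Set (Ideal R) :=
  {I | ∀ (M : Type u) [AddCommGroup M] [Module R M],
    (∀ i, J i • (⊤ : Submodule R M) = ⊤) → I • (⊤ : Submodule R M) = ⊤}

theorem memDiv_divFilter_iff (J : ι → Ideal R) (M : Type u) [AddCommGroup M] [Module R M] :
    MemDiv (divFilter J) M ↔ ∀ i, J i • (⊤ : Submodule R M) = ⊤ :=
  ⟨fun h i => h _ fun _ _ _ hd => hd i, fun h _ hI => hI M h⟩

theorem isGabrielFilter_divFilter (J : ι → Ideal R) : IsGabrielFilter (divFilter J) := by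
  refine ⟨fun M _ _ _ => Submodule.top_smul _,
    fun I I' hI hle M _ _ hd => Submodule.smul_top_eq_top_of_le hle (hI M hd),
    fun I hI x M _ _ hd => Submodule.smul_top_eq_top_of_le (fun r hr => ?_) (hI M hd), ?_⟩
  · exact I.mul_mem_left x hr
  · rintro J' ⟨I, hI, hJ'⟩ M _ _ hd
    set Q := M ⧸ J' • (⊤ : Submodule R M)
    have hdQ (i : ι) : J i • (⊤ : Submodule R Q) = ⊤ :=
      Submodule.smul_top_eq_top_of_surjective (Submodule.mkQ_surjective _) (hd i)
    have hIQ : I ≤ Module.annihilator R Q := fun x hx =>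
      Module.mem_annihilator_of_colon_smul_top_eq_top
        (Submodule.le_annihilator_quotient_smul_top J') (hJ' x hx Q hdQ)
    exact Submodule.Quotient.subsingleton_iff.1
      (Module.subsingleton_of_le_annihilator hIQ (hI Q hdQ))

-- Test `I` on the product of one module for each finitely generated `F ≤ I` outside the
-- filter: a single element of `I • Π N_F` already lies in some `F • Π N_F`.
theorem gabrielFiniteType_divFilter {J : ι → Ideal R} (hJ : ∀ i, (J i).FG) :
    GabrielFiniteType (divFilter J) := by
  intro I hI
  by_contra! hcon
  have hN (F : {F : Ideal R // F.FG ∧ F ≤ I}) : ∃ (N : Type u) (_ : AddCommGroup N)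
      (_ : Module R N), (∀ i, J i • (⊤ : Submodule R N) = ⊤) ∧
        ∃ m : N, m ∉ F.1 • (⊤ : Submodule R N) := by
    have hF : F.1 ∉ divFilter J := fun h => hcon F.1 h F.2.2 F.2.1
    simp only [divFilter, Set.mem_ofPred_eq, not_forall, exists_prop] at hF
    obtain ⟨N, _, _, hNJ, hne⟩ := hF
    exact ⟨N, _, _, hNJ, not_forall.1 (mt Submodule.eq_top_iff'.2 hne)⟩
  choose N _ _ hNJ m hm using hN
  have hmI : m ∈ I • (⊤ : Submodule R (∀ F, N F)) := by
    rw [hI _ fun i => Submodule.smul_top_eq_top_pi_of_fg (hJ i) fun F => hNJ F i]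
    trivial
  obtain ⟨F, hF, hFI, hmF⟩ := Submodule.exists_fg_le_mem_smul hmI
  refine hm ⟨F, hF, hFI⟩ ?_
  have := Submodule.mem_map_of_mem (f := LinearMap.proj (R := R) (φ := N) ⟨F, hF, hFI⟩) hmF
  rw [Submodule.map_smul''] at this
  exact Submodule.smul_mono le_rfl le_top this

end DivFilter

theorem stmt_14_general {R : Type u} [CommRing R]
    (P₁ P₀ : Type u) [AddCommGroup P₁] [Module R P₁] [AddCommGroup P₀] [Module R P₀]
    (σ : P₁ →ₗ[R] P₀)
    (hft : ∃ (I : Type u) (s : I → FGProjMap R),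
      ∀ (M : Type u) [AddCommGroup M] [Module R M],
        MemD σ M ↔ ∀ i, MemD (s i).f M) :
    ∃ G : Set (Ideal R), IsGabrielFilter G ∧ GabrielFiniteType G ∧
      ∀ (M : Type u) [AddCommGroup M] [Module R M], MemD σ M ↔ MemDiv G M := by
  obtain ⟨ι, s, hs⟩ := hft
  choose J hJ hsJ using fun i => (s i).exists_fg_ideal_memD_iff
  refine ⟨divFilter J, isGabrielFilter_divFilter J, gabrielFiniteType_divFilter hJ,
    fun M _ _ => ?_⟩
  rw [hs M, memDiv_divFilter_iff]
  exact forall_congr' fun i => hsJ i M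

/-- If `σ` (a map between projective modules over a commutative ring) is of finite type,
then `D_σ = Div G` for some Gabriel filter of finite type `G`. -/
theorem stmt_14 {R : Type u} [CommRing R]
    (P₁ P₀ : Type u) [AddCommGroup P₁] [Module R P₁] [AddCommGroup P₀] [Module R P₀]
    [Module.Projective R P₁] [Module.Projective R P₀] (σ : P₁ →ₗ[R] P₀)
    (hft : ∃ (I : Type u) (s : I → FGProjMap R),
      ∀ (M : Type u) [AddCommGroup M] [Module R M],
        MemD σ M ↔ ∀ i, MemD (s i).f M) :
    ∃ G : Set (Ideal R), IsGabrielFilter G ∧ GabrielFiniteType G ∧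
      ∀ (M : Type u) [AddCommGroup M] [Module R M], MemD σ M ↔ MemDiv G M :=
  stmt_14_general P₁ P₀ σ hft
end
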